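/- arXiv:1104.4680 — 7 statements merged into one kernel-verified Lean document; each statement's English description precedes it below -/
import Mathlib

section
/- Let A be a symmetric doubly stochastic n×n real matrix (the normalized adjacency matrix of a regular weighted graph G on vertex set V = [n]) with eigenvalues λ₁ ≥ … ≥ λₙ, and let 1 ≤ m ≤ n be an integer and ε ≥ 0 a real with λ_m ≥ 1 − ε. Then there exist vectors v₁, …, vₙ ∈ ℝ^m such that E_{ij∼G} ⟨v_i, v_j⟩ ≥ 1 − ε, E_{i,j∈V} ⟨v_i, v_j⟩² = 1/m, and E_{i∈V} ‖v_i‖² = 1. -/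
/-!
Take orthonormal eigenvectors `u₁, …, u_m` of `A` with eigenvalues at least `1 - ε`, put them as
the columns of an `n × m` matrix `U`, and let `vᵢ` be the `i`-th row of `U` scaled by `√(n/m)`.
The Gram matrix of the rows is `U Uᵀ`, so all three averages are traces: using `Uᵀ U = 1`,
`∑ A_ij (U Uᵀ)_ij = tr (Uᵀ A U) = ∑ λ_k ≥ m (1 - ε)`, `∑ (U Uᵀ)_ij² = tr (Uᵀ U Uᵀ U) = m` and
`∑ (U Uᵀ)_ii = tr (Uᵀ U) = m`.
-/

open Finset RealInnerProductSpace

noncomputable section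

/-- The number of eigenvalues of a Hermitian (symmetric real) matrix that are
at least `τ`, counted with multiplicity. -/
def rankGe {n : ℕ} {A : Matrix (Fin n) (Fin n) ℝ} (hA : A.IsHermitian) (τ : ℝ) : ℕ :=
  (Finset.univ.filter (fun r => τ ≤ hA.eigenvalues r)).card

namespace Matrix

variable {ι κ R : Type*}

theorem inner_toLp_toLp_eq_mul_transpose_apply [Fintype κ] (U : Matrix ι κ ℝ) (i j : ι) :
    ⟪WithLp.toLp 2 (U i), WithLp.toLp 2 (U j)⟫ = (U * Uᵀ) i j := by
  simp [EuclideanSpace.inner_eq_star_dotProduct, mul_apply, dotProduct, mul_comm]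

variable [Fintype ι] [CommSemiring R]

theorem transpose_submatrix_mul_mul_submatrix {ι' : Type*} [Fintype ι'] (M : Matrix ι ι' R)
    (B : Matrix ι ι R) (e : κ → ι') :
    (M.submatrix id e)ᵀ * B * M.submatrix id e = (Mᵀ * B * M).submatrix e e := by
  ext
  simp [mul_apply, Finset.sum_mul]

variable [Fintype κ]

theorem sum_sum_mul_apply_eq_trace (M N : Matrix ι κ R) :
    ∑ i, ∑ j, M i j * N i j = trace (M * Nᵀ) := by
  simp [trace, mul_apply]

theorem sum_sum_mul_mul_transpose_apply (A : Matrix ι ι R) (U : Matrix ι κ R) :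
    ∑ i, ∑ j, A i j * (U * Uᵀ) i j = trace (Uᵀ * A * U) := by
  rw [sum_sum_mul_apply_eq_trace, transpose_mul, transpose_transpose, ← Matrix.mul_assoc,
    trace_mul_comm, Matrix.mul_assoc]

variable [DecidableEq κ] {U : Matrix ι κ R}

theorem trace_mul_transpose_of_transpose_mul_self (hU : Uᵀ * U = 1) :
    trace (U * Uᵀ) = Fintype.card κ := by
  rw [trace_mul_comm, hU, trace_one]

theorem sum_sum_sq_mul_transpose_apply_of_transpose_mul_self (hU : Uᵀ * U = 1) :
    ∑ i, ∑ j, (U * Uᵀ) i j ^ 2 = Fintype.card κ := by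
  simp only [sq]
  rw [sum_sum_mul_mul_transpose_apply, Matrix.mul_assoc, Matrix.mul_assoc, hU, Matrix.mul_one,
    hU, trace_one]

end Matrix

namespace Matrix.IsHermitian

variable {ι κ : Type*} [Fintype ι] [DecidableEq ι] {A : Matrix ι ι ℝ} (hA : A.IsHermitian)

theorem transpose_eigenvectorUnitary_mul_mul :
    (hA.eigenvectorUnitary : Matrix ι ι ℝ)ᵀ * A * hA.eigenvectorUnitary =
      diagonal hA.eigenvalues := by
  have := hA.conjStarAlgAut_star_eigenvectorUnitary
  rw [Unitary.conjStarAlgAut_star_apply] at this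
  simpa [Matrix.star_eq_conjTranspose, conjTranspose_eq_transpose_of_trivial] using this

theorem transpose_eigenvectorUnitary_mul_self :
    (hA.eigenvectorUnitary : Matrix ι ι ℝ)ᵀ * hA.eigenvectorUnitary = 1 := by
  simpa [Matrix.star_eq_conjTranspose, conjTranspose_eq_transpose_of_trivial] using
    Unitary.coe_star_mul_self hA.eigenvectorUnitary

variable [DecidableEq κ] {e : κ → ι}

theorem transpose_mul_self_submatrix_eigenvectorUnitary (he : Function.Injective e) :
    ((hA.eigenvectorUnitary : Matrix ι ι ℝ).submatrix id e)ᵀ *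
      (hA.eigenvectorUnitary : Matrix ι ι ℝ).submatrix id e = 1 := by
  rw [← Matrix.mul_one (_ᵀ), transpose_submatrix_mul_mul_submatrix, Matrix.mul_one,
    transpose_eigenvectorUnitary_mul_self, submatrix_one _ he]

theorem transpose_mul_mul_submatrix_eigenvectorUnitary (he : Function.Injective e) :
    ((hA.eigenvectorUnitary : Matrix ι ι ℝ).submatrix id e)ᵀ * A *
      (hA.eigenvectorUnitary : Matrix ι ι ℝ).submatrix id e = diagonal (hA.eigenvalues ∘ e) := by
  rw [transpose_submatrix_mul_mul_submatrix, transpose_eigenvectorUnitary_mul_mul,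
    submatrix_diagonal _ _ he]

end Matrix.IsHermitian

theorem stmt_1_general {n : ℕ} (hn : 0 < n)
    (A : Matrix (Fin n) (Fin n) ℝ) (hA : A.IsHermitian)
    (m : ℕ) (hm1 : 1 ≤ m) (ε : ℝ)
    (hlam : m ≤ rankGe hA (1 - ε)) :
    ∃ v : Fin n → EuclideanSpace ℝ (Fin m),
      1 - ε ≤ (1 / (n : ℝ)) * ∑ i, ∑ j, A i j * ⟪v i, v j⟫ ∧
      (1 / (n : ℝ) ^ 2) * ∑ i, ∑ j, (⟪v i, v j⟫ : ℝ) ^ 2 = 1 / (m : ℝ) ∧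
      (1 / (n : ℝ)) * ∑ i, ‖v i‖ ^ 2 = 1 := by
  obtain ⟨T, hT, hTcard⟩ := exists_subset_card_eq hlam
  set e := T.orderEmbOfFin hTcard
  have heig (k : Fin m) : 1 - ε ≤ hA.eigenvalues (e k) :=
    (mem_filter.mp (hT (T.orderEmbOfFin_mem hTcard k))).2
  set U := (hA.eigenvectorUnitary : Matrix (Fin n) (Fin n) ℝ).submatrix id e
  have hU : U.transpose * U = 1 := hA.transpose_mul_self_submatrix_eigenvectorUnitary e.injective
  have hAU : U.transpose * A * U = Matrix.diagonal (hA.eigenvalues ∘ e) :=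
    hA.transpose_mul_mul_submatrix_eigenvectorUnitary e.injective
  set c := √((n : ℝ) / m)
  have hinner (i j : Fin n) :
      ⟪c • WithLp.toLp 2 (U i), c • WithLp.toLp 2 (U j)⟫ = n / m * (U * U.transpose) i j := by
    rw [real_inner_smul_left, real_inner_smul_right, Matrix.inner_toLp_toLp_eq_mul_transpose_apply,
      ← mul_assoc, Real.mul_self_sqrt (by positivity)]
  have hn' : (n : ℝ) ≠ 0 := by positivity
  have hm' : (m : ℝ) ≠ 0 := by positivity
  refine ⟨fun i => c • WithLp.toLp 2 (U i), ?_, ?_, ?_⟩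
  · simp_rw [hinner, mul_left_comm _ ((n : ℝ) / m), ← mul_sum,
      Matrix.sum_sum_mul_mul_transpose_apply, hAU, Matrix.trace_diagonal]
    calc 1 - ε = 1 / n * (n / m * ∑ _k : Fin m, (1 - ε)) := by
          rw [sum_const, card_univ, Fintype.card_fin, nsmul_eq_mul]
          field_simp
      _ ≤ 1 / n * (n / m * ∑ k, (hA.eigenvalues ∘ e) k) := by
          gcongr with k
          exact heig k
  · simp_rw [hinner, mul_pow, ← mul_sum,
      Matrix.sum_sum_sq_mul_transpose_apply_of_transpose_mul_self hU, Fintype.card_fin]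
    field_simp
  · have htrace := Matrix.trace_mul_transpose_of_transpose_mul_self hU
    simp only [Matrix.trace, Matrix.diag_apply, Fintype.card_fin] at htrace
    simp_rw [← real_inner_self_eq_norm_sq, hinner, ← mul_sum, htrace]
    field_simp

/-- If the normalized adjacency matrix `A` of a regular weighted graph
(symmetric, doubly stochastic) has at least `m` eigenvalues that are at least `1 - ε`
(i.e. `λ_m ≥ 1 - ε` in non-increasing order), then there are vectors `v₁, …, vₙ ∈ ℝ^m`
with `E_{ij∼G} ⟨v_i, v_j⟩ ≥ 1 - ε`, `E_{i,j∈V} ⟨v_i, v_j⟩² = 1/m` and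
`E_{i∈V} ‖v_i‖² = 1`. -/
theorem stmt_1 {n : ℕ} (hn : 0 < n)
    (A : Matrix (Fin n) (Fin n) ℝ) (hA : A.IsHermitian)
    (hnonneg : ∀ i j, 0 ≤ A i j) (hrow : ∀ i, ∑ j, A i j = 1)
    (m : ℕ) (hm1 : 1 ≤ m) (hmn : m ≤ n) (ε : ℝ) (hε : 0 ≤ ε)
    (hlam : m ≤ rankGe hA (1 - ε)) :
    ∃ v : Fin n → EuclideanSpace ℝ (Fin m),
      1 - ε ≤ (1 / (n : ℝ)) * ∑ i, ∑ j, A i j * ⟪v i, v j⟫ ∧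
      (1 / (n : ℝ) ^ 2) * ∑ i, ∑ j, (⟪v i, v j⟫ : ℝ) ^ 2 = 1 / (m : ℝ) ∧
      (1 / (n : ℝ)) * ∑ i, ‖v i‖ ^ 2 = 1 :=
  stmt_1_general hn A hA m hm1 ε hlam

end
end

section
/- Let X_i and X_j be jointly distributed random variables with values in [k] = {1, …, k} on a finite probability space, and suppose Var X_{jb} > 0 for every b ∈ [k]. Then Var X_i − E_{{X_j}} Var[X_i | X_j] ≥ (1/k) · Σ_{a,b∈[k]} Cov(X_{ia}, X_{jb})² / Var X_{jb}. -/
/-!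
Write `g_a := E[X_{ia} | X_j]`. By the law of total variance,
`Var X_{ia} - E Var[X_{ia} | X_j] = Var g_a`. Since `X_{jb}` is a function of `X_j`,
`Cov(X_{ia}, X_{jb}) = Cov(g_a, X_{jb})`, so by Cauchy–Schwarz every term
`Cov(X_{ia}, X_{jb})² / Var X_{jb}` is at most `Var g_a`; averaging over `b` and summing over `a`
gives the bound.
-/

open Finset

noncomputable section

variable {Ω : Type*} [Fintype Ω]

/-- Expectation of a real random variable `f` under the weight function `p`. -/
def pExp (p : Ω → ℝ) (f : Ω → ℝ) : ℝ := ∑ ω, p ω * f ω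

/-- Probability of the event `E` under the weight function `p`. -/
def pProb (p : Ω → ℝ) (E : Ω → Prop) [DecidablePred E] : ℝ := ∑ ω, if E ω then p ω else 0

/-- Variance of a real random variable under `p`. -/
def pVar (p : Ω → ℝ) (f : Ω → ℝ) : ℝ := pExp p (fun ω => (f ω - pExp p f) ^ 2)

/-- Covariance of two real random variables under `p`. -/
def pCov (p : Ω → ℝ) (f g : Ω → ℝ) : ℝ :=
  pExp p (fun ω => (f ω - pExp p f) * (g ω - pExp p g))

/-- The measure `p` conditioned on the event `E`. -/
def pCond (p : Ω → ℝ) (E : Ω → Prop) [DecidablePred E] : Ω → ℝ :=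
  fun ω => if E ω then p ω / pProb p E else 0

/-- The `{0,1}`-indicator of the event `X = a`. -/
def pInd {k : ℕ} (X : Ω → Fin k) (a : Fin k) : Ω → ℝ := fun ω => if X ω = a then 1 else 0

/-- The variance of a `[k]`-valued random variable, `Var X = Σ_a Var X_a`. -/
def pVarK (p : Ω → ℝ) {k : ℕ} (X : Ω → Fin k) : ℝ := ∑ a, pVar p (pInd X a)

/-- `E_{{Y}} Var[f | Y]`: the expectation over the distribution of `Y` of the variance of
the real random variable `f` conditioned on the value of `Y`. -/
def pCondVar (p : Ω → ℝ) (f : Ω → ℝ) {β : Type*} [DecidableEq β] (Y : Ω → β) : ℝ :=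
  ∑ y ∈ Finset.univ.image Y,
    if 0 < pProb p (fun ω => Y ω = y)
    then pProb p (fun ω => Y ω = y) * pVar (pCond p (fun ω => Y ω = y)) f
    else 0

/-- `E_{{Y}} Var[X | Y]` for a `[k]`-valued random variable `X`, where
`Var X = Σ_a Var X_a`. -/
def pCondVarK (p : Ω → ℝ) {k : ℕ} (X : Ω → Fin k) {β : Type*} [DecidableEq β] (Y : Ω → β) : ℝ :=
  ∑ a, pCondVar p (pInd X a) Y

open scoped BigOperators

def pCondExp (p : Ω → ℝ) (f : Ω → ℝ) {β : Type*} [DecidableEq β] (Y : Ω → β) : Ω → ℝ :=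
  fun ω => pExp (pCond p (fun ω' => Y ω' = Y ω)) f

section

variable {β : Type*} [DecidableEq β] (p : Ω → ℝ)

lemma pVar_nonneg (hp : ∀ ω, 0 ≤ p ω) (f : Ω → ℝ) : 0 ≤ pVar p f :=
  sum_nonneg fun ω _ => mul_nonneg (hp ω) (sq_nonneg _)

lemma pCov_eq_pExp_mul_sub_mul (hsum : ∑ ω, p ω = 1) (f g : Ω → ℝ) :
    pCov p f g = pExp p (fun ω => f ω * g ω) - pExp p f * pExp p g := by
  unfold pCov pExp
  set mf := ∑ ω, p ω * f ω
  set mg := ∑ ω, p ω * g ω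
  have hexpand : ∀ ω, p ω * ((f ω - mf) * (g ω - mg)) =
      p ω * (f ω * g ω) - mg * (p ω * f ω) - mf * (p ω * g ω) + mf * mg * p ω :=
    fun ω => by ring
  simp only [hexpand, sum_add_distrib, sum_sub_distrib, ← mul_sum, hsum]
  ring

lemma pVar_eq_pExp_mul_sub_sq (hsum : ∑ ω, p ω = 1) (f : Ω → ℝ) :
    pVar p f = pExp p (fun ω => f ω * f ω) - pExp p f ^ 2 := by
  rw [sq, ← pCov_eq_pExp_mul_sub_mul p hsum]
  simp only [pVar, pCov, sq]

theorem pCov_sq_le_pVar_mul_pVar (hp : ∀ ω, 0 ≤ p ω) (f g : Ω → ℝ) :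
    pCov p f g ^ 2 ≤ pVar p f * pVar p g :=
  sum_sq_le_sum_mul_sum_of_sq_le_mul univ (fun ω _ => mul_nonneg (hp ω) (sq_nonneg _))
    (fun ω _ => mul_nonneg (hp ω) (sq_nonneg _)) fun ω _ => le_of_eq (by ring)

lemma pProb_nonneg (hp : ∀ ω, 0 ≤ p ω) (E : Ω → Prop) [DecidablePred E] : 0 ≤ pProb p E :=
  sum_nonneg fun ω _ => ite_nonneg (hp ω) le_rfl

lemma le_pProb (hp : ∀ ω, 0 ≤ p ω) {E : Ω → Prop} [DecidablePred E] {ω : Ω} (hE : E ω) :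
    p ω ≤ pProb p E := by
  simpa [pProb, hE] using single_le_sum (f := fun ω => if E ω then p ω else 0)
    (fun ω' _ => ite_nonneg (hp ω') le_rfl) (mem_univ ω)

lemma pProb_mul_pCond (hp : ∀ ω, 0 ≤ p ω) (E : Ω → Prop) [DecidablePred E] (ω : Ω) :
    pProb p E * pCond p E ω = if E ω then p ω else 0 := by
  by_cases hE : E ω
  · rcases (pProb_nonneg p hp E).eq_or_lt with h | h
    · have hω : p ω = 0 := ((le_pProb p hp hE).trans h.ge).antisymm (hp ω)
      simp [pCond, hE, ← h, hω]
    · simp [pCond, hE, mul_div_cancel₀ _ h.ne']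
  · simp [pCond, hE]

lemma pProb_mul_pExp_pCond (hp : ∀ ω, 0 ≤ p ω) (E : Ω → Prop) [DecidablePred E] (f : Ω → ℝ) :
    pProb p E * pExp (pCond p E) f = ∑ ω, if E ω then p ω * f ω else 0 := by
  simp only [pExp, mul_sum, ← mul_assoc, pProb_mul_pCond p hp, ite_mul, zero_mul]

lemma sum_image_sum_ite_eq (Y : Ω → β) (F : β → Ω → ℝ) :
    ∑ y ∈ univ.image Y, ∑ ω, (if Y ω = y then F y ω else 0) = ∑ ω, F (Y ω) ω := by
  rw [sum_comm]
  refine sum_congr rfl fun ω _ => ?_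
  rw [sum_ite_eq]
  simp

lemma sum_pProb_mul (Y : Ω → β) (c : β → ℝ) :
    ∑ y ∈ univ.image Y, pProb p (fun ω => Y ω = y) * c y = pExp p (fun ω => c (Y ω)) := by
  simp only [pProb, sum_mul, ite_mul, zero_mul]
  exact sum_image_sum_ite_eq Y fun y ω => p ω * c y

lemma sum_pProb_mul_pExp_pCond (hp : ∀ ω, 0 ≤ p ω) (Y : Ω → β) (F : β → Ω → ℝ) :
    ∑ y ∈ univ.image Y, pProb p (fun ω => Y ω = y) * pExp (pCond p (fun ω => Y ω = y)) (F y) =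
      pExp p (fun ω => F (Y ω) ω) := by
  simp only [pProb_mul_pExp_pCond p hp]
  exact sum_image_sum_ite_eq Y fun y ω => p ω * F y ω

lemma pExp_mul_comp_eq_pExp_pCondExp_mul (hp : ∀ ω, 0 ≤ p ω) (f : Ω → ℝ) (Y : Ω → β)
    (c : β → ℝ) :
    pExp p (fun ω => f ω * c (Y ω)) = pExp p (fun ω => pCondExp p f Y ω * c (Y ω)) := by
  rw [← sum_pProb_mul_pExp_pCond p hp Y fun y ω => f ω * c y]
  refine (sum_congr rfl fun y _ => ?_).trans
    (sum_pProb_mul p Y fun y => pExp (pCond p (fun ω => Y ω = y)) f * c y)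
  simp only [pExp, sum_mul, mul_assoc]

lemma pExp_pCondExp (hp : ∀ ω, 0 ≤ p ω) (f : Ω → ℝ) (Y : Ω → β) :
    pExp p (pCondExp p f Y) = pExp p f := by
  simpa using (pExp_mul_comp_eq_pExp_pCondExp_mul p hp f Y fun _ => 1).symm

lemma pCondVar_eq_pExp_sq (hp : ∀ ω, 0 ≤ p ω) (f : Ω → ℝ) (Y : Ω → β) :
    pCondVar p f Y = pExp p (fun ω => (f ω - pCondExp p f Y ω) ^ 2) := by
  refine (sum_congr rfl fun y _ => ?_).trans (sum_pProb_mul_pExp_pCond p hp Y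
    fun y ω => (f ω - pExp (pCond p (fun ω' => Y ω' = y)) f) ^ 2)
  split_ifs with hpos
  · rfl
  · rw [(not_lt.mp hpos).antisymm (pProb_nonneg p hp _), zero_mul]

theorem pVar_sub_pCondVar (hp : ∀ ω, 0 ≤ p ω) (hsum : ∑ ω, p ω = 1) (f : Ω → ℝ) (Y : Ω → β) :
    pVar p f - pCondVar p f Y = pVar p (pCondExp p f Y) := by
  set g := pCondExp p f Y
  have hexpand : ∀ ω, p ω * (f ω - g ω) ^ 2 =
      p ω * (f ω * f ω) - 2 * (p ω * (f ω * g ω)) + p ω * (g ω * g ω) := fun ω => by ring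
  have hsq : pExp p (fun ω => (f ω - g ω) ^ 2) = pExp p (fun ω => f ω * f ω) -
      2 * pExp p (fun ω => f ω * g ω) + pExp p (fun ω => g ω * g ω) := by
    simp only [pExp, hexpand, sum_add_distrib, sum_sub_distrib, ← mul_sum]
  have hfg : pExp p (fun ω => f ω * g ω) = pExp p (fun ω => g ω * g ω) :=
    pExp_mul_comp_eq_pExp_pCondExp_mul p hp f Y fun y => pExp (pCond p (fun ω => Y ω = y)) f
  rw [pCondVar_eq_pExp_sq p hp, hsq, hfg, pVar_eq_pExp_mul_sub_sq p hsum,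
    pVar_eq_pExp_mul_sub_sq p hsum, pExp_pCondExp p hp]
  ring

theorem pCov_comp_eq_pCov_pCondExp (hp : ∀ ω, 0 ≤ p ω) (hsum : ∑ ω, p ω = 1) (f : Ω → ℝ)
    (Y : Ω → β) (c : β → ℝ) :
    pCov p f (fun ω => c (Y ω)) = pCov p (pCondExp p f Y) (fun ω => c (Y ω)) := by
  rw [pCov_eq_pExp_mul_sub_mul p hsum, pCov_eq_pExp_mul_sub_mul p hsum,
    pExp_mul_comp_eq_pExp_pCondExp_mul p hp, pExp_pCondExp p hp]

end

theorem stmt_4_general {Ω : Type*} [Fintype Ω] (p : Ω → ℝ)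
    (hp : ∀ ω, 0 ≤ p ω) (hsum : ∑ ω, p ω = 1)
    (k : ℕ) (Xi Xj : Ω → Fin k) :
    (1 / (k : ℝ)) * ∑ a : Fin k, ∑ b : Fin k,
        pCov p (pInd Xi a) (pInd Xj b) ^ 2 / pVar p (pInd Xj b) ≤
      pVarK p Xi - pCondVarK p Xi Xj := by
  set g : Fin k → Ω → ℝ := fun a => pCondExp p (pInd Xi a) Xj
  have hterm (a b : Fin k) :
      pCov p (pInd Xi a) (pInd Xj b) ^ 2 / pVar p (pInd Xj b) ≤ pVar p (g a) := by
    have hcov : pCov p (pInd Xi a) (pInd Xj b) = pCov p (g a) (pInd Xj b) :=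
      pCov_comp_eq_pCov_pCondExp p hp hsum _ Xj fun y => if y = b then 1 else 0
    rw [hcov]
    exact div_le_of_le_mul₀ (pVar_nonneg p hp _) (pVar_nonneg p hp _)
      (pCov_sq_le_pVar_mul_pVar p hp _ _)
  calc (1 / (k : ℝ)) * ∑ a : Fin k, ∑ b : Fin k,
        pCov p (pInd Xi a) (pInd Xj b) ^ 2 / pVar p (pInd Xj b)
      = ∑ a : Fin k, 𝔼 b, pCov p (pInd Xi a) (pInd Xj b) ^ 2 / pVar p (pInd Xj b) := by
        rw [mul_sum]
        simp only [Fintype.expect_eq_sum_div_card, Fintype.card_fin, one_div_mul_eq_div]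
    _ ≤ ∑ a, pVar p (g a) :=
        sum_le_sum fun a _ => expect_le ⟨a, mem_univ a⟩ fun b _ => hterm a b
    _ = pVarK p Xi - pCondVarK p Xi Xj := by
        simp only [pVarK, pCondVarK, ← sum_sub_distrib, pVar_sub_pCondVar p hp hsum, g]

/-- Conditioning on `X_j` decreases the variance of `X_i` by at least
`(1/k) · Σ_{a,b} Cov(X_{ia}, X_{jb})² / Var X_{jb}`. -/
theorem stmt_4 {Ω : Type*} [Fintype Ω] (p : Ω → ℝ)
    (hp : ∀ ω, 0 ≤ p ω) (hsum : ∑ ω, p ω = 1)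
    (k : ℕ) (Xi Xj : Ω → Fin k)
    (hvar : ∀ b : Fin k, 0 < pVar p (pInd Xj b)) :
    (1 / (k : ℝ)) * ∑ a : Fin k, ∑ b : Fin k,
        pCov p (pInd Xi a) (pInd Xj b) ^ 2 / pVar p (pInd Xj b) ≤
      pVarK p Xi - pCondVarK p Xi Xj :=
  stmt_4_general p hp hsum k Xi Xj

end
end

section
/- Let X₁, …, Xₙ be jointly distributed random variables with values in [k] = {1, …, k} on a finite probability space, and suppose Var X_{ia} > 0 for all i ∈ [n] and a ∈ [k]. Then there exist vectors v₁, …, vₙ in a real inner product space with ‖v_i‖ ≤ 1 for all i, such that for all i, j ∈ [n]: (1/k²)·(Σ_{(a,b)∈[k]²} |Cov(X_{ia}, X_{jb})|)² ≤ ⟨v_i, v_j⟩ ≤ (1/k)·Σ_{(a,b)∈[k]²} (1/2)·(1/Var X_{ia} + 1/Var X_{jb})·Cov(X_{ia}, X_{jb})². -/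
open Finset RealInnerProductSpace

noncomputable section

variable {Ω : Type*} [Fintype Ω]

/-!
Embed the centred indicators as vectors `x_{ia} = (√p(ω) (1[X_i ω = a] - P(X_i = a)))_ω`, so that
`⟪x_{ia}, x_{jb}⟫ = Cov(X_{ia}, X_{jb})`, `‖x_{ia}‖² = Var X_{ia}` and
`∑_a ‖x_{ia}‖² ≤ ∑_a P(X_i = a) = 1`. The vectors `v_i = k^{-1/2} ∑_a ‖x_{ia}‖⁻¹ x_{ia} ⊗ x_{ia}`
have `⟪v_i, v_j⟫ = (1/k) ∑_{a,b} ⟪x_{ia}, x_{jb}⟫² / (‖x_{ia}‖ ‖x_{jb}‖)`. The upper bound is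
AM-GM, `1/(st) ≤ (1/s² + 1/t²)/2`. Cauchy-Schwarz in `E` bounds each term by `‖x_{ia}‖ ‖x_{jb}‖`,
and `(∑_a ‖x_{ia}‖)² ≤ k`, so `‖v_i‖ ≤ 1`; Cauchy-Schwarz in the sum, with
`|⟪x, y⟫| = (|⟪x, y⟫| / √(‖x‖ ‖y‖)) √(‖x‖ ‖y‖)`, gives the lower bound. Finally any `n` vectors
have an isometric copy in `ℝⁿ`, a square root of their Gram matrix.
-/

open scoped TensorProduct

open scoped MatrixOrder in
theorem exists_euclideanSpace_inner_eq {ι E : Type*} [Fintype ι] [NormedAddCommGroup E]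
    [InnerProductSpace ℝ E] (v : ι → E) :
    ∃ w : ι → EuclideanSpace ℝ ι, ∀ i j, ⟪w i, w j⟫ = ⟪v i, v j⟫ := by
  classical
  obtain ⟨B, hB⟩ := CStarAlgebra.nonneg_iff_eq_star_mul_self.mp (Matrix.posSemidef_gram ℝ v).nonneg
  refine ⟨fun i => WithLp.toLp 2 fun m => B m i, fun i j => ?_⟩
  have hij := congrFun (congrFun hB i) j
  simp only [Matrix.gram_apply, Matrix.star_eq_conjTranspose, Matrix.mul_apply,
    Matrix.conjTranspose_apply, star_trivial] at hij
  simp [PiLp.inner_apply, hij, mul_comm]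

section TensorSquare

variable {E : Type*} [NormedAddCommGroup E] [InnerProductSpace ℝ E] {κ : Type*} [Fintype κ]

def tensorSquareSum (x : κ → E) : E ⊗[ℝ] E := ∑ a, (‖x a‖⁻¹ • x a) ⊗ₜ[ℝ] x a

theorem inner_tensorSquareSum (x y : κ → E) :
    ⟪tensorSquareSum x, tensorSquareSum y⟫ = ∑ a, ∑ b, ⟪x a, y b⟫ ^ 2 / (‖x a‖ * ‖y b‖) := by
  simp only [tensorSquareSum, sum_inner]
  simp only [inner_sum, TensorProduct.inner_tmul, real_inner_smul_left, real_inner_smul_right]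
  refine sum_congr rfl fun a _ => sum_congr rfl fun b _ => ?_
  rw [div_eq_mul_inv, mul_inv]
  ring

theorem inner_tensorSquareSum_nonneg (x y : κ → E) :
    0 ≤ ⟪tensorSquareSum x, tensorSquareSum y⟫ := by
  rw [inner_tensorSquareSum]
  positivity

theorem inner_tensorSquareSum_le (x y : κ → E) :
    ⟪tensorSquareSum x, tensorSquareSum y⟫ ≤ (∑ a, ‖x a‖) * ∑ b, ‖y b‖ := by
  rw [inner_tensorSquareSum, sum_mul_sum]
  refine sum_le_sum fun a _ => sum_le_sum fun b _ => div_le_of_le_mul₀ (by positivity)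
    (by positivity) ?_
  rw [← sq]
  exact sq_le_sq.mpr ((abs_real_inner_le_norm _ _).trans (le_abs_self _))

theorem sq_sum_abs_inner_le (x y : κ → E) :
    (∑ a, ∑ b, |⟪x a, y b⟫|) ^ 2 ≤
      ⟪tensorSquareSum x, tensorSquareSum y⟫ * ((∑ a, ‖x a‖) * ∑ b, ‖y b‖) := by
  rw [inner_tensorSquareSum, sum_mul_sum]
  simp only [← Fintype.sum_prod_type' fun a b => |⟪x a, y b⟫|,
    ← Fintype.sum_prod_type' fun a b => ⟪x a, y b⟫ ^ 2 / (‖x a‖ * ‖y b‖),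
    ← Fintype.sum_prod_type' fun a b => ‖x a‖ * ‖y b‖]
  refine sum_sq_le_sum_mul_sum_of_sq_le_mul _ (fun _ _ => by positivity)
    (fun _ _ => by positivity) fun z _ => ?_
  rcases eq_or_ne (‖x z.1‖ * ‖y z.2‖) 0 with h | h
  · have : ⟪x z.1, y z.2⟫ = 0 := abs_nonpos_iff.mp (h ▸ abs_real_inner_le_norm _ _)
    simp [this]
  · rw [sq_abs, div_mul_cancel₀ _ h]

omit [InnerProductSpace ℝ E] in
theorem sum_norm_mul_sum_norm_le_card {x y : κ → E} (hx : ∑ a, ‖x a‖ ^ 2 ≤ 1)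
    (hy : ∑ b, ‖y b‖ ^ 2 ≤ 1) : (∑ a, ‖x a‖) * ∑ b, ‖y b‖ ≤ Fintype.card κ := by
  have hcard : (0 : ℝ) ≤ Fintype.card κ := Nat.cast_nonneg _
  have hx' : (∑ a, ‖x a‖) ^ 2 ≤ Fintype.card κ :=
    sq_sum_le_card_mul_sum_sq.trans (by simpa using mul_le_mul_of_nonneg_left hx hcard)
  have hy' : (∑ b, ‖y b‖) ^ 2 ≤ Fintype.card κ :=
    sq_sum_le_card_mul_sum_sq.trans (by simpa using mul_le_mul_of_nonneg_left hy hcard)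
  nlinarith [two_mul_le_add_sq (∑ a, ‖x a‖) (∑ b, ‖y b‖)]

theorem one_div_mul_le_half_mul_add (s t : ℝ) : 1 / (s * t) ≤ 1 / 2 * (1 / s ^ 2 + 1 / t ^ 2) := by
  have := two_mul_le_add_sq s⁻¹ t⁻¹
  simp only [one_div, mul_inv, ← inv_pow]
  linarith

theorem exists_inner_bounds_of_sum_norm_sq_le_one {ι : Type*} [Fintype ι] (x : ι → κ → E)
    (hx : ∀ i, ∑ a, ‖x i a‖ ^ 2 ≤ 1) :
    ∃ v : ι → EuclideanSpace ℝ ι, (∀ i, ‖v i‖ ≤ 1) ∧ ∀ i j,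
      1 / (Fintype.card κ : ℝ) ^ 2 * (∑ a, ∑ b, |⟪x i a, x j b⟫|) ^ 2 ≤ ⟪v i, v j⟫ ∧
      ⟪v i, v j⟫ ≤ 1 / (Fintype.card κ : ℝ) * ∑ a, ∑ b,
        1 / 2 * (1 / ‖x i a‖ ^ 2 + 1 / ‖x j b‖ ^ 2) * ⟪x i a, x j b⟫ ^ 2 := by
  set c : ℝ := (Fintype.card κ : ℝ)
  obtain ⟨w, hw⟩ := exists_euclideanSpace_inner_eq fun i => tensorSquareSum (x i)
  set v := fun i => (√c)⁻¹ • w i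
  have hinner : ∀ i j, ⟪v i, v j⟫ = 1 / c * ⟪tensorSquareSum (x i), tensorSquareSum (x j)⟫ := by
    intro i j
    rw [real_inner_smul_left, real_inner_smul_right, ← mul_assoc, ← mul_inv,
      Real.mul_self_sqrt (Nat.cast_nonneg _), one_div, hw]
  refine ⟨v, fun i => ?_, fun i j => ⟨?_, ?_⟩⟩
  · have hsq : ‖v i‖ ^ 2 ≤ 1 := by
      rw [← real_inner_self_eq_norm_sq, hinner]
      calc 1 / c * ⟪tensorSquareSum (x i), tensorSquareSum (x i)⟫ ≤ 1 / c * c := by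
            gcongr
            exact (inner_tensorSquareSum_le _ _).trans (sum_norm_mul_sum_norm_le_card (hx i) (hx i))
        _ ≤ 1 := by rw [one_div_mul_eq_div]; exact div_self_le_one c
    exact pow_le_one_iff_of_nonneg (norm_nonneg _) two_ne_zero |>.mp hsq
  · have hT := inner_tensorSquareSum_nonneg (x i) (x j)
    calc 1 / c ^ 2 * (∑ a, ∑ b, |⟪x i a, x j b⟫|) ^ 2
        ≤ 1 / c ^ 2 * (⟪tensorSquareSum (x i), tensorSquareSum (x j)⟫ * c) := by
          gcongr
          exact (sq_sum_abs_inner_le _ _).trans <| mul_le_mul_of_nonneg_left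
            (sum_norm_mul_sum_norm_le_card (hx i) (hx j)) hT
      _ = ⟪v i, v j⟫ := by
          rw [hinner]
          rcases eq_or_ne c 0 with h | h
          · simp [h]
          · field_simp
  · rw [hinner, inner_tensorSquareSum]
    gcongr with a _ b _
    rw [div_eq_mul_one_div, mul_comm]
    gcongr
    exact one_div_mul_le_half_mul_add _ _

end TensorSquare

section CenteredEmbedding

def centeredVec (p f : Ω → ℝ) : EuclideanSpace ℝ Ω :=
  WithLp.toLp 2 fun ω => √(p ω) * (f ω - pExp p f)

variable {p : Ω → ℝ}

theorem inner_centeredVec (hp : ∀ ω, 0 ≤ p ω) (f g : Ω → ℝ) :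
    ⟪centeredVec p f, centeredVec p g⟫ = pCov p f g := by
  simp only [centeredVec, PiLp.inner_apply, pCov, pExp]
  refine sum_congr rfl fun ω _ => ?_
  have := Real.mul_self_sqrt (hp ω)
  simp only [RCLike.inner_apply, conj_trivial]
  linear_combination (f ω - ∑ ω, p ω * f ω) * (g ω - ∑ ω, p ω * g ω) * this

theorem norm_centeredVec_sq (hp : ∀ ω, 0 ≤ p ω) (f : Ω → ℝ) :
    ‖centeredVec p f‖ ^ 2 = pVar p f := by
  rw [← real_inner_self_eq_norm_sq, inner_centeredVec hp, pCov, pVar]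
  simp only [sq]

theorem pVar_eq_pExp_sq_sub (hsum : ∑ ω, p ω = 1) (f : Ω → ℝ) :
    pVar p f = pExp p (fun ω => f ω ^ 2) - pExp p f ^ 2 := by
  set μ := pExp p f
  have hexpand : ∀ ω, p ω * (f ω - μ) ^ 2 = p ω * f ω ^ 2 - 2 * μ * (p ω * f ω) + μ ^ 2 * p ω :=
    fun ω => by ring
  rw [pVar, pExp, sum_congr rfl fun ω _ => hexpand ω, sum_add_distrib, sum_sub_distrib, ← mul_sum,
    ← mul_sum, hsum, ← pExp, ← pExp]
  ring

theorem pVar_pInd_le_pExp_pInd (hsum : ∑ ω, p ω = 1) {k : ℕ} (X : Ω → Fin k) (a : Fin k) :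
    pVar p (pInd X a) ≤ pExp p (pInd X a) := by
  have hidem : (fun ω => pInd X a ω ^ 2) = pInd X a := by
    ext ω
    by_cases h : X ω = a <;> simp [pInd, h]
  rw [pVar_eq_pExp_sq_sub hsum, hidem]
  exact sub_le_self _ (sq_nonneg _)

theorem sum_pExp_pInd (hsum : ∑ ω, p ω = 1) {k : ℕ} (X : Ω → Fin k) :
    ∑ a, pExp p (pInd X a) = 1 := by
  simp only [pExp, pInd, mul_ite, mul_one, mul_zero]
  rw [sum_comm]
  simpa using hsum

theorem sum_pVar_pInd_le_one (hsum : ∑ ω, p ω = 1) {k : ℕ} (X : Ω → Fin k) :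
    ∑ a, pVar p (pInd X a) ≤ 1 :=
  (sum_le_sum fun a _ => pVar_pInd_le_pExp_pInd hsum X a).trans_eq (sum_pExp_pInd hsum X)

end CenteredEmbedding

theorem stmt_5_general {Ω : Type*} [Fintype Ω] (p : Ω → ℝ)
    (hp : ∀ ω, 0 ≤ p ω) (hsum : ∑ ω, p ω = 1)
    (n k : ℕ) (X : Fin n → Ω → Fin k) :
    ∃ v : Fin n → EuclideanSpace ℝ (Fin n),
      (∀ i, ‖v i‖ ≤ 1) ∧
      ∀ i j,
        (1 / (k : ℝ) ^ 2) *
            (∑ a : Fin k, ∑ b : Fin k, |pCov p (pInd (X i) a) (pInd (X j) b)|) ^ 2 ≤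
          ⟪v i, v j⟫ ∧
        (⟪v i, v j⟫ : ℝ) ≤
          (1 / (k : ℝ)) * ∑ a : Fin k, ∑ b : Fin k,
            (1 / 2) * (1 / pVar p (pInd (X i) a) + 1 / pVar p (pInd (X j) b)) *
              pCov p (pInd (X i) a) (pInd (X j) b) ^ 2 := by
  have hx : ∀ i, ∑ a, ‖centeredVec p (pInd (X i) a)‖ ^ 2 ≤ 1 := fun i => by
    simpa only [norm_centeredVec_sq hp] using sum_pVar_pInd_le_one hsum (X i)
  obtain ⟨v, hnorm, hinner⟩ :=
    exists_inner_bounds_of_sum_norm_sq_le_one (fun i a => centeredVec p (pInd (X i) a)) hx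
  refine ⟨v, hnorm, fun i j => ?_⟩
  simpa only [inner_centeredVec hp, norm_centeredVec_sq hp, Fintype.card_fin] using hinner i j

/-- For jointly distributed `[k]`-valued random variables `X₁, …, Xₙ`
with `Var X_{ia} > 0`, there are vectors `v₁, …, vₙ` in the unit ball such that for all
`i, j`:
`(1/k²)(Σ_{a,b} |Cov(X_{ia}, X_{jb})|)² ≤ ⟨v_i, v_j⟩
   ≤ (1/k) Σ_{a,b} ½(1/Var X_{ia} + 1/Var X_{jb}) Cov(X_{ia}, X_{jb})²`. -/
theorem stmt_5 {Ω : Type*} [Fintype Ω] (p : Ω → ℝ)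
    (hp : ∀ ω, 0 ≤ p ω) (hsum : ∑ ω, p ω = 1)
    (n k : ℕ) (X : Fin n → Ω → Fin k)
    (hvar : ∀ i a, 0 < pVar p (pInd (X i) a)) :
    ∃ v : Fin n → EuclideanSpace ℝ (Fin n),
      (∀ i, ‖v i‖ ≤ 1) ∧
      ∀ i j,
        (1 / (k : ℝ) ^ 2) *
            (∑ a : Fin k, ∑ b : Fin k, |pCov p (pInd (X i) a) (pInd (X j) b)|) ^ 2 ≤
          ⟪v i, v j⟫ ∧
        (⟪v i, v j⟫ : ℝ) ≤
          (1 / (k : ℝ)) * ∑ a : Fin k, ∑ b : Fin k,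
            (1 / 2) * (1 / pVar p (pInd (X i) a) + 1 / pVar p (pInd (X j) b)) *
              pCov p (pInd (X i) a) (pInd (X j) b) ^ 2 :=
  stmt_5_general p hp hsum n k X

end
end

section
/- Let v₁, …, vₙ be vectors in a real inner product space with ‖v_i‖ ≤ 1 for all i. Then for every ε > 0 there exists a subset U ⊆ {1, …, n} with |U| ≤ 1/ε such that, letting w_i denote the orthogonal projection of v_i onto the orthogonal complement of the span of {v_j : j ∈ U}, one has E_{i,j∈[n]} ⟨w_i, w_j⟩² / (‖w_i‖·‖w_j‖) ≤ ε, where a term is interpreted as 0 whenever w_i = 0 or w_j = 0. -/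
open Finset RealInnerProductSpace

noncomputable section

/-! Greedy energy decrement. Let `w^U_i` be the component of `v_i` orthogonal to
`span {v_j | j ∈ U}` and `Φ(U) = ∑ᵢ ‖w^U_i‖²`, so `0 ≤ Φ ≤ n`. By AM-GM,
`⟨a,b⟩²/(‖a‖‖b‖) ≤ (⟨a,b⟩²/‖a‖² + ⟨a,b⟩²/‖b‖²)/2`, so if the average exceeds `ε` there is a
`j` with `∑ᵢ ⟨w_i, w_j⟩²/‖w_j‖² > nε`. Adding `j` to `U` removes from each `w_i` at least its
component along `w_j`, so `Φ` drops by more than `nε`; this can happen at most `1/ε` times. -/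

section InnerProduct

variable {E : Type*} [NormedAddCommGroup E] [InnerProductSpace ℝ E]

theorem real_inner_sq_div_norm_sq_le (x y : E) : ⟪x, y⟫ ^ 2 / ‖y‖ ^ 2 ≤ ‖x‖ ^ 2 := by
  refine div_le_of_le_mul₀ (by positivity) (by positivity) ?_
  rw [← mul_pow, ← sq_abs]
  gcongr
  exact abs_real_inner_le_norm x y

theorem norm_sq_starProjection_orthogonal_add_inner_sq_div_le (K : Submodule ℝ E)
    [K.HasOrthogonalProjection] (a : E) {z : E} (hz : z ∈ K) :
    ‖Kᗮ.starProjection a‖ ^ 2 + ⟪a, z⟫ ^ 2 / ‖z‖ ^ 2 ≤ ‖a‖ ^ 2 := by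
  have hinner : ⟪a, z⟫ = ⟪K.starProjection a, z⟫ := by
    rw [K.inner_starProjection_left_eq_right, K.starProjection_eq_self_iff.mpr hz]
  rw [K.norm_sq_eq_add_norm_sq_starProjection a, hinner]
  linarith [real_inner_sq_div_norm_sq_le (K.starProjection a) z]

theorem div_mul_le_add_div_sq {c : ℝ} (hc : 0 ≤ c) (a b : ℝ) :
    c / (a * b) ≤ (c / a ^ 2 + c / b ^ 2) / 2 := by
  have hamgm := two_mul_le_add_sq a⁻¹ b⁻¹
  calc c / (a * b) = c * (a⁻¹ * b⁻¹) := by rw [div_eq_mul_inv, mul_inv]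
    _ ≤ c * ((a⁻¹ ^ 2 + b⁻¹ ^ 2) / 2) := by gcongr; linarith
    _ = (c / a ^ 2 + c / b ^ 2) / 2 := by simp only [div_eq_mul_inv, inv_pow]; ring

theorem sum_sum_inner_sq_div_norm_mul_norm_le {ι : Type*} [Fintype ι] (w : ι → E) :
    ∑ i, ∑ j, ⟪w i, w j⟫ ^ 2 / (‖w i‖ * ‖w j‖) ≤ ∑ j, ∑ i, ⟪w i, w j⟫ ^ 2 / ‖w j‖ ^ 2 := by
  have hswap : ∑ i, ∑ j, ⟪w i, w j⟫ ^ 2 / ‖w i‖ ^ 2 = ∑ j, ∑ i, ⟪w i, w j⟫ ^ 2 / ‖w j‖ ^ 2 :=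
    sum_congr rfl fun i _ => sum_congr rfl fun j _ => by rw [real_inner_comm]
  calc ∑ i, ∑ j, ⟪w i, w j⟫ ^ 2 / (‖w i‖ * ‖w j‖)
      ≤ ∑ i, ∑ j, (⟪w i, w j⟫ ^ 2 / ‖w i‖ ^ 2 + ⟪w i, w j⟫ ^ 2 / ‖w j‖ ^ 2) / 2 :=
        sum_le_sum fun i _ => sum_le_sum fun j _ => div_mul_le_add_div_sq (sq_nonneg _) _ _
    _ = (∑ i, ∑ j, ⟪w i, w j⟫ ^ 2 / ‖w i‖ ^ 2 + ∑ i, ∑ j, ⟪w i, w j⟫ ^ 2 / ‖w j‖ ^ 2) / 2 := by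
        simp only [add_div, sum_add_distrib, sum_div]
    _ = ∑ j, ∑ i, ⟪w i, w j⟫ ^ 2 / ‖w j‖ ^ 2 := by
        rw [hswap, sum_comm (f := fun i j => ⟪w i, w j⟫ ^ 2 / ‖w j‖ ^ 2)]
        ring

end InnerProduct

theorem Finset.exists_card_mul_le_of_forall_exists_insert {α : Type*} [Fintype α]
    [DecidableEq α] {Φ : Finset α → ℝ} {p : Finset α → Prop} {δ : ℝ} (hδ : 0 ≤ δ)
    (hΦ : ∀ U, 0 ≤ Φ U) (hstep : ∀ U, ¬p U → ∃ j, Φ (insert j U) + δ < Φ U) :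
    ∃ U, p U ∧ #U * δ ≤ Φ ∅ := by
  obtain ⟨U, hU, hmax⟩ := (univ.filter fun U : Finset α => Φ U + #U * δ ≤ Φ ∅).exists_max_image
    card ⟨∅, by simp⟩
  simp only [mem_filter, mem_univ, true_and] at hU hmax
  refine ⟨U, ?_, by linarith [hΦ U]⟩
  by_contra hpU
  obtain ⟨j, hj⟩ := hstep U hpU
  by_cases hjU : j ∈ U
  · rw [insert_eq_of_mem hjU] at hj
    linarith
  · have hcard := card_insert_of_notMem hjU
    have := hmax (insert j U) (by rw [hcard]; push_cast; linarith)
    omega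

instance FiniteDimensional.span_image_finset {K V ι : Type*} [DivisionRing K] [AddCommGroup V]
    [Module K V] (f : ι → V) (s : Finset ι) : FiniteDimensional K (Submodule.span K (f '' s)) :=
  FiniteDimensional.span_of_finite K (s.finite_toSet.image f)

section Residual

variable {E ι : Type*} [NormedAddCommGroup E] [InnerProductSpace ℝ E] (v : ι → E)

def spanResidual (U : Finset ι) (i : ι) : E :=
  (Submodule.span ℝ (v '' U))ᗮ.starProjection (v i)

theorem eq_spanResidual {U : Finset ι} {i : ι} {w : E}
    (hw : w ∈ (Submodule.span ℝ (v '' U))ᗮ)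
    (hvw : v i - w ∈ Submodule.span ℝ (v '' U)) : w = spanResidual v U i :=
  (Submodule.eq_starProjection_of_mem_orthogonal hw (Submodule.le_orthogonal_orthogonal _ hvw)).symm

theorem norm_spanResidual_le (U : Finset ι) (i : ι) : ‖spanResidual v U i‖ ≤ ‖v i‖ :=
  Submodule.norm_starProjection_apply_le _ _

theorem starProjection_orthogonal_spanResidual {U U' : Finset ι} (h : U ⊆ U') (i : ι) :
    (Submodule.span ℝ (v '' U'))ᗮ.starProjection (spanResidual v U i) =
      spanResidual v U' i := by
  have hle : (Submodule.span ℝ (v '' U'))ᗮ ≤ (Submodule.span ℝ (v '' U))ᗮ :=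
    Submodule.orthogonal_le (Submodule.span_mono (by gcongr))
  exact congr($(Submodule.starProjection_comp_starProjection_of_le hle) (v i))

variable [DecidableEq ι]

theorem spanResidual_mem_span_insert (U : Finset ι) (j : ι) :
    spanResidual v U j ∈ Submodule.span ℝ (v '' ↑(insert j U)) := by
  rw [spanResidual, Submodule.starProjection_orthogonal_val]
  refine Submodule.sub_mem _ (Submodule.subset_span (by simp)) ?_
  exact Submodule.span_mono (by gcongr; exact subset_insert j U)
    (Submodule.starProjection_apply_mem _ _)

theorem norm_sq_spanResidual_insert_add_le (U : Finset ι) (i j : ι) :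
    ‖spanResidual v (insert j U) i‖ ^ 2 +
        ⟪spanResidual v U i, spanResidual v U j⟫ ^ 2 / ‖spanResidual v U j‖ ^ 2 ≤
      ‖spanResidual v U i‖ ^ 2 := by
  rw [← starProjection_orthogonal_spanResidual v (subset_insert j U)]
  exact norm_sq_starProjection_orthogonal_add_inner_sq_div_le _ _
    (spanResidual_mem_span_insert v U j)

theorem exists_sum_norm_sq_spanResidual_insert_add_lt [Fintype ι] {U : Finset ι} {δ : ℝ}
    (h : Fintype.card ι * δ < ∑ i, ∑ j, ⟪spanResidual v U i, spanResidual v U j⟫ ^ 2 /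
      (‖spanResidual v U i‖ * ‖spanResidual v U j‖)) :
    ∃ j, ∑ i, ‖spanResidual v (insert j U) i‖ ^ 2 + δ < ∑ i, ‖spanResidual v U i‖ ^ 2 := by
  have hsum : ∑ _j : ι, δ < ∑ j, ∑ i,
      ⟪spanResidual v U i, spanResidual v U j⟫ ^ 2 / ‖spanResidual v U j‖ ^ 2 := by
    simpa using h.trans_le (sum_sum_inner_sq_div_norm_mul_norm_le _)
  obtain ⟨j, -, hj⟩ := exists_lt_of_sum_lt hsum
  have hdec := sum_le_sum fun i (_ : i ∈ univ) => norm_sq_spanResidual_insert_add_le v U i j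
  rw [sum_add_distrib] at hdec
  exact ⟨j, by linarith⟩

end Residual

/-- **low-rank approximation for sets of vectors.** Given vectors
`v₁, …, vₙ` in the unit ball of a real inner product space, for every `ε > 0` there is a
subset `U` with `|U| ≤ 1/ε` such that, letting `w_i` be the orthogonal projection of
`v_i` onto the orthogonal complement of the span of `{v_j : j ∈ U}` (characterized by
`w_i ⊥ span` and `v_i - w_i ∈ span`), one has
`E_{i,j} ⟨w_i, w_j⟩²/(‖w_i‖·‖w_j‖) ≤ ε` (terms with a zero vector are `0`, which is the
Lean convention for division by zero). -/
theorem stmt_9 {H : Type*} [NormedAddCommGroup H] [InnerProductSpace ℝ H]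
    (n : ℕ) (hn : 0 < n) (v : Fin n → H) (hv : ∀ i, ‖v i‖ ≤ 1)
    (ε : ℝ) (hε : 0 < ε) :
    ∃ U : Finset (Fin n), (U.card : ℝ) ≤ 1 / ε ∧
      ∀ w : Fin n → H,
        (∀ i, w i ∈ (Submodule.span ℝ {x : H | ∃ j ∈ U, x = v j})ᗮ ∧
              v i - w i ∈ Submodule.span ℝ {x : H | ∃ j ∈ U, x = v j}) →
        (1 / (n : ℝ) ^ 2) * ∑ i, ∑ j, (⟪w i, w j⟫ : ℝ) ^ 2 / (‖w i‖ * ‖w j‖) ≤ ε := by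
  have hn' : (0 : ℝ) < n := by exact_mod_cast hn
  obtain ⟨U, hQ, hcard⟩ := exists_card_mul_le_of_forall_exists_insert
    (Φ := fun U => ∑ i, ‖spanResidual v U i‖ ^ 2)
    (p := fun U => ∑ i, ∑ j, ⟪spanResidual v U i, spanResidual v U j⟫ ^ 2 /
      (‖spanResidual v U i‖ * ‖spanResidual v U j‖) ≤ n * (n * ε))
    (by positivity) (fun U => sum_nonneg fun i _ => sq_nonneg _)
    (fun U hU => exists_sum_norm_sq_spanResidual_insert_add_lt v (δ := n * ε) (by simpa using hU))
  have hΦ : ∑ i, ‖spanResidual v ∅ i‖ ^ 2 ≤ n := by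
    simpa using sum_le_sum fun i (_ : i ∈ univ) =>
      pow_le_one₀ (norm_nonneg _) ((norm_spanResidual_le v ∅ i).trans (hv i)) (n := 2)
  refine ⟨U, ?_, fun w hw => ?_⟩
  · rw [le_div_iff₀ hε]
    exact le_of_mul_le_mul_right (by linarith) hn'
  · have hspan : {x : H | ∃ j ∈ U, x = v j} = v '' U := by ext; simp [eq_comm]
    obtain rfl : w = spanResidual v U :=
      funext fun i => eq_spanResidual v (hspan ▸ (hw i).1) (hspan ▸ (hw i).2)
    rw [one_div_mul_eq_div, div_le_iff₀ (by positivity)]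
    linarith
end
end

section
/- Let v₁, …, vₙ be vectors in a real inner product space. Then there exists an index j₀ ∈ [n] such that, letting u := v_{j₀}/‖v_{j₀}‖ (and u := 0 if v_{j₀} = 0) and v′_i := v_i − ⟨v_i, u⟩·u for all i, one has E_{i∈[n]} ‖v′_i‖² ≤ E_{i∈[n]} ‖v_i‖² − E_{i,j∈[n]} ⟨v_i, v_j⟩² / (‖v_i‖·‖v_j‖), where a term of the last average is interpreted as 0 whenever v_i = 0 or v_j = 0. -/
/-!
Put `g j := ∑ i ⟪v i, v j⟫² / ‖v j‖²`, the total squared mass of the `v i` along the direction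
of `v j`. Projecting away the direction of `v j₀` lowers `∑ ‖v i‖²` by at least `g j₀`, since
`‖x - ⟪x, u⟫ u‖² ≤ ‖x‖² - ⟪x, u⟫²` whenever `‖u‖ ≤ 1`. On the other hand AM-GM,
`a² / (‖v i‖ ‖v j‖) ≤ (a² / ‖v i‖² + a² / ‖v j‖²) / 2`, bounds the double sum by `∑ j, g j`,
which is at most `n · g j₀` for a maximising `j₀`.
-/

open Finset RealInnerProductSpace

lemma sq_div_mul_le_add_div_two (a x y : ℝ) (hx : 0 ≤ x) (hy : 0 ≤ y) :
    a ^ 2 / (x * y) ≤ (a ^ 2 / x ^ 2 + a ^ 2 / y ^ 2) / 2 := by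
  rcases hx.eq_or_lt with rfl | hx
  · simp only [zero_mul, div_zero]; positivity
  rcases hy.eq_or_lt with rfl | hy
  · simp only [mul_zero, div_zero]; positivity
  have gap : (a ^ 2 / x ^ 2 + a ^ 2 / y ^ 2) / 2 - a ^ 2 / (x * y)
      = a ^ 2 * (x - y) ^ 2 / (2 * x ^ 2 * y ^ 2) := by
    field_simp
    ring
  have : 0 ≤ a ^ 2 * (x - y) ^ 2 / (2 * x ^ 2 * y ^ 2) := by positivity
  linarith

lemma exists_sum_le_card_mul {ι : Type*} [Fintype ι] [Nonempty ι] (f : ι → ℝ) :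
    ∃ j, ∑ i, f i ≤ Fintype.card ι * f j := by
  obtain ⟨j, -, hj⟩ := exists_max_image univ f univ_nonempty
  refine ⟨j, ?_⟩
  simpa [nsmul_eq_mul] using sum_le_card_nsmul univ f (f j) fun i _ => hj i (mem_univ i)

section InnerProductSpace

variable {H : Type*} [NormedAddCommGroup H] [InnerProductSpace ℝ H]

lemma norm_inv_norm_smul_le_one (y : H) : ‖‖y‖⁻¹ • y‖ ≤ 1 := by
  rcases eq_or_ne y 0 with rfl | hy
  · simp
  · exact (norm_smul_inv_norm hy).le

lemma inner_inv_norm_smul_sq (x y : H) : ⟪x, ‖y‖⁻¹ • y⟫ ^ 2 = ⟪x, y⟫ ^ 2 / ‖y‖ ^ 2 := by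
  rw [real_inner_smul_right, mul_pow, inv_pow, inv_mul_eq_div]

lemma norm_sub_inner_smul_sq_le {u : H} (hu : ‖u‖ ≤ 1) (x : H) :
    ‖x - ⟪x, u⟫ • u‖ ^ 2 ≤ ‖x‖ ^ 2 - ⟪x, u⟫ ^ 2 := by
  have hu2 : ‖u‖ ^ 2 ≤ 1 := pow_le_one₀ (norm_nonneg u) hu
  rw [norm_sub_sq_real, real_inner_smul_right, norm_smul, mul_pow, Real.norm_eq_abs, sq_abs]
  nlinarith [sq_nonneg ⟪x, u⟫]

lemma sum_sum_inner_sq_div_norm_mul_le {ι : Type*} [Fintype ι] (v : ι → H) :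
    ∑ i, ∑ j, ⟪v i, v j⟫ ^ 2 / (‖v i‖ * ‖v j‖) ≤ ∑ j, ∑ i, ⟪v i, v j⟫ ^ 2 / ‖v j‖ ^ 2 := by
  have symm : ∑ i, ∑ j, ⟪v i, v j⟫ ^ 2 / ‖v i‖ ^ 2 = ∑ j, ∑ i, ⟪v i, v j⟫ ^ 2 / ‖v j‖ ^ 2 := by
    simp_rw [real_inner_comm (v _) (v _)]
  calc ∑ i, ∑ j, ⟪v i, v j⟫ ^ 2 / (‖v i‖ * ‖v j‖)
      ≤ ∑ i, ∑ j, (⟪v i, v j⟫ ^ 2 / ‖v i‖ ^ 2 + ⟪v i, v j⟫ ^ 2 / ‖v j‖ ^ 2) / 2 :=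
        sum_le_sum fun i _ => sum_le_sum fun j _ =>
          sq_div_mul_le_add_div_two _ _ _ (norm_nonneg _) (norm_nonneg _)
    _ = (∑ i, ∑ j, ⟪v i, v j⟫ ^ 2 / ‖v i‖ ^ 2 + ∑ i, ∑ j, ⟪v i, v j⟫ ^ 2 / ‖v j‖ ^ 2) / 2 := by
        simp only [add_div, sum_add_distrib, sum_div]
    _ = ∑ j, ∑ i, ⟪v i, v j⟫ ^ 2 / ‖v j‖ ^ 2 := by
        rw [symm, sum_comm (f := fun i j => ⟪v i, v j⟫ ^ 2 / ‖v j‖ ^ 2)]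
        ring

end InnerProductSpace

/-- **one approximation step.** For vectors `v₁, …, vₙ` in a real inner
product space, there is an index `j₀` such that, letting `u` be the unit vector in the
direction of `v_{j₀}` (or `0` if `v_{j₀} = 0`) and `v'_i := v_i − ⟨v_i, u⟩·u`, one has
`E_i ‖v'_i‖² ≤ E_i ‖v_i‖² − E_{i,j} ⟨v_i, v_j⟩²/(‖v_i‖·‖v_j‖)` (terms with a zero vector
are `0`, the Lean convention for division by zero; note `‖0‖⁻¹ • 0 = 0`). -/
theorem stmt_10 {H : Type*} [NormedAddCommGroup H] [InnerProductSpace ℝ H]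
    (n : ℕ) (hn : 0 < n) (v : Fin n → H) :
    ∃ j₀ : Fin n,
      ∀ (u : H) (v' : Fin n → H),
        u = ‖v j₀‖⁻¹ • v j₀ →
        (∀ i, v' i = v i - (⟪v i, u⟫ : ℝ) • u) →
        (1 / (n : ℝ)) * ∑ i, ‖v' i‖ ^ 2 ≤
          (1 / (n : ℝ)) * ∑ i, ‖v i‖ ^ 2 -
            (1 / (n : ℝ) ^ 2) * ∑ i, ∑ j, (⟪v i, v j⟫ : ℝ) ^ 2 / (‖v i‖ * ‖v j‖) := by
  have : Nonempty (Fin n) := ⟨⟨0, hn⟩⟩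
  obtain ⟨j₀, hj₀⟩ := exists_sum_le_card_mul fun j => ∑ i, ⟪v i, v j⟫ ^ 2 / ‖v j‖ ^ 2
  refine ⟨j₀, fun u v' hu hv' => ?_⟩
  rw [Fintype.card_fin] at hj₀
  have projection : ∑ i, ‖v' i‖ ^ 2 ≤ ∑ i, ‖v i‖ ^ 2 - ∑ i, ⟪v i, v j₀⟫ ^ 2 / ‖v j₀‖ ^ 2 := by
    rw [← sum_sub_distrib]
    refine sum_le_sum fun i _ => ?_
    rw [hv' i, ← inner_inv_norm_smul_sq, ← hu]
    exact norm_sub_inner_smul_sq_le (hu ▸ norm_inv_norm_smul_le_one _) _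
  have double_sum := (sum_sum_inner_sq_div_norm_mul_le v).trans hj₀
  have hn' : (n : ℝ) ≠ 0 := Nat.cast_ne_zero.mpr hn.ne'
  calc (1 / (n : ℝ)) * ∑ i, ‖v' i‖ ^ 2
      ≤ 1 / n * (∑ i, ‖v i‖ ^ 2 - ∑ i, ⟪v i, v j₀⟫ ^ 2 / ‖v j₀‖ ^ 2) := by gcongr
    _ = 1 / n * ∑ i, ‖v i‖ ^ 2 - 1 / n ^ 2 * (n * ∑ i, ⟪v i, v j₀⟫ ^ 2 / ‖v j₀‖ ^ 2) := by
        field_simp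
    _ ≤ _ := by gcongr
end

section
/- Let (X_i)_{i∈V} be jointly distributed random variables with values in [k] = {1, …, k} on a finite probability space, indexed by a finite set V, and let S, T ⊆ V. Let μ_T denote the law of X_T = (X_t)_{t∈T}, and let μ^{|S}_T denote the following distribution on [k]^T: sample x_S from the law of X_S = (X_s)_{s∈S}; then, independently for each t ∈ T, sample x_t from the conditional distribution of X_t given X_S = x_S. Then the total variation distance between μ_T and μ^{|S}_T is at most Σ_{t∈T} E_{{X_S}} Var[X_t | X_S]. -/
open Finset

noncomputable section

variable {Ω : Type*} [Fintype Ω]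

/-- Conditional probability `Pr[E | F]` (defined as `0` if `Pr[F] = 0`). -/
def pCondProb (p : Ω → ℝ) (E F : Ω → Prop) [DecidablePred E] [DecidablePred F] : ℝ :=
  pProb p (fun ω => E ω ∧ F ω) / pProb p F

/-!
Couple the two laws: draw `ω`, and given `ω` draw a vector `y` whose coordinates `y t` are
independent samples from the conditional laws of `X t` given `X_S = X_S ω`. The pair
`(X_T ω, y)` has marginals `μ_T` and `μ^{|S}_T`, so their total variation distance is at most
`Pr[X_T ω ≠ y] ≤ ∑_t Pr[X_t ω ≠ y t]`. Conditionally on `X_S = z`, `X_t` and `y t` are independent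
with the same law `q`, so they differ with probability `∑_a q_a (1 - q_a)`, which is the variance
`Var[X_t | X_S = z]` of the indicator vector of `X_t`.
-/

namespace pProb

variable {p : Ω → ℝ}

theorem nonneg (hp : ∀ ω, 0 ≤ p ω) (E : Ω → Prop) [DecidablePred E] : 0 ≤ pProb p E :=
  sum_nonneg fun ω _ => by split_ifs <;> simp [hp ω]

theorem mono (hp : ∀ ω, 0 ≤ p ω) {E F : Ω → Prop} [DecidablePred E] [DecidablePred F]
    (h : ∀ ω, E ω → F ω) : pProb p E ≤ pProb p F :=
  sum_le_sum fun ω _ => by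
    by_cases hE : E ω
    · simp [hE, h ω hE]
    · by_cases hF : F ω <;> simp [hE, hF, hp ω]

theorem congr {E F : Ω → Prop} [DecidablePred E] [DecidablePred F] (h : ∀ ω, E ω ↔ F ω) :
    pProb p E = pProb p F :=
  sum_congr rfl fun ω _ => if_congr (h ω) rfl rfl

theorem sum_mul_comp {β : Type*} [Fintype β] [DecidableEq β] (Y : Ω → β) (g : β → ℝ) :
    ∑ ω, p ω * g (Y ω) = ∑ y, pProb p (fun ω => Y ω = y) * g y := by
  simp only [pProb, sum_mul, ite_mul, zero_mul]
  rw [sum_comm]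
  exact sum_congr rfl fun ω _ => by rw [sum_ite_eq]; simp

theorem sum_and {α : Type*} [Fintype α] [DecidableEq α] (X : Ω → α)
    (F : Ω → Prop) [DecidablePred F] :
    ∑ a, pProb p (fun ω => X ω = a ∧ F ω) = pProb p F := by
  simp only [pProb, ite_and]
  rw [sum_comm]
  exact sum_congr rfl fun ω _ => by rw [sum_ite_eq]; simp

theorem exists_le_sum (hp : ∀ ω, 0 ≤ p ω) {ι : Type*} [Fintype ι] (E : ι → Ω → Prop)
    [∀ i, DecidablePred (E i)] [DecidablePred fun ω => ∃ i, E i ω] :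
    pProb p (fun ω => ∃ i, E i ω) ≤ ∑ i, pProb p (E i) := by
  simp only [pProb]
  rw [sum_comm]
  refine sum_le_sum fun ω _ => ?_
  split_ifs with h
  · obtain ⟨i, hi⟩ := h
    calc p ω = if E i ω then p ω else 0 := (if_pos hi).symm
      _ ≤ ∑ j, if E j ω then p ω else 0 :=
        single_le_sum (f := fun j => if E j ω then p ω else 0)
          (fun j _ => by split_ifs <;> simp [hp ω]) (mem_univ i)
  · exact sum_nonneg fun j _ => by split_ifs <;> simp [hp ω]

theorem sum_abs_sub_le (hp : ∀ ω, 0 ≤ p ω) {β : Type*} [Fintype β] [DecidableEq β]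
    (f g : Ω → β) :
    ∑ x, |pProb p (fun ω => f ω = x) - pProb p (fun ω => g ω = x)| ≤
      2 * pProb p (fun ω => f ω ≠ g ω) := by
  have hpoint : ∀ ω, ∑ x, |(if f ω = x then p ω else 0) - (if g ω = x then p ω else 0)| =
      2 * if f ω ≠ g ω then p ω else 0 := by
    intro ω
    by_cases h : f ω = g ω
    · simp [h]
    · have : ∀ x, |(if f ω = x then p ω else 0) - (if g ω = x then p ω else 0)| =
          (if f ω = x then p ω else 0) + (if g ω = x then p ω else 0) := by
        intro x
        by_cases hf : f ω = x <;> by_cases hg : g ω = x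
        · exact absurd (hf.trans hg.symm) h
        all_goals simp [hf, hg, abs_of_nonneg (hp ω)]
      simp only [this, sum_add_distrib, sum_ite_eq, mem_univ, if_true, h, ne_eq,
        not_false_eq_true]
      ring
  calc ∑ x, |pProb p (fun ω => f ω = x) - pProb p (fun ω => g ω = x)|
      ≤ ∑ x, ∑ ω, |(if f ω = x then p ω else 0) - (if g ω = x then p ω else 0)| :=
        sum_le_sum fun x _ => by
          simp only [pProb, ← sum_sub_distrib]; exact abs_sum_le_sum_abs _ _
    _ = 2 * pProb p (fun ω => f ω ≠ g ω) := by
        rw [sum_comm, pProb, mul_sum]; exact sum_congr rfl fun ω _ => hpoint ω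

theorem and_eq_pCondProb_mul (hp : ∀ ω, 0 ≤ p ω) (E F : Ω → Prop)
    [DecidablePred E] [DecidablePred F] :
    pProb p (fun ω => E ω ∧ F ω) = pCondProb p E F * pProb p F := by
  by_cases h : pProb p F = 0
  · rw [h, mul_zero]
    exact le_antisymm (h ▸ mono hp fun ω => And.right) (nonneg hp _)
  · rw [pCondProb, div_mul_cancel₀ _ h]

theorem ne_zero_of_mem (hp : ∀ ω, 0 ≤ p ω)
    {E : Ω → Prop} [DecidablePred E] {ω : Ω} (hω : p ω ≠ 0) (hE : E ω) : pProb p E ≠ 0 := by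
  refine ((hp ω).lt_of_ne' hω |>.trans_le ?_).ne'
  calc p ω = if E ω then p ω else 0 := (if_pos hE).symm
    _ ≤ pProb p E := single_le_sum (f := fun ω => if E ω then p ω else 0)
        (fun ω _ => by split_ifs <;> simp [hp ω]) (mem_univ ω)

end pProb

section Variance

variable {p : Ω → ℝ} {k : ℕ}

theorem sum_pCondProb {α : Type*} [Fintype α] [DecidableEq α] (X : Ω → α) (F : Ω → Prop)
    [DecidablePred F] (hF : pProb p F ≠ 0) :
    ∑ a, pCondProb p (fun ω => X ω = a) F = 1 := by
  simp only [pCondProb, ← sum_div, pProb.sum_and, div_self hF]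

theorem pExp_pCond_pInd (X : Ω → Fin k) (a : Fin k) (F : Ω → Prop) [DecidablePred F] :
    pExp (pCond p F) (pInd X a) = pCondProb p (fun ω => X ω = a) F := by
  simp only [pExp, pCond, pInd, pCondProb, pProb, sum_div]
  exact sum_congr rfl fun ω _ => by by_cases hF : F ω <;> by_cases hX : X ω = a <;> simp [hF, hX]

theorem sum_pCond (F : Ω → Prop) [DecidablePred F] (hF : pProb p F ≠ 0) :
    ∑ ω, pCond p F ω = 1 := by
  rw [← div_self hF]
  nth_rw 1 [pProb]
  rw [sum_div]
  exact sum_congr rfl fun ω _ => by rw [pCond, ite_div, zero_div]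

theorem pVar_pCond_pInd (X : Ω → Fin k) (a : Fin k) (F : Ω → Prop) [DecidablePred F]
    (hF : pProb p F ≠ 0) :
    pVar (pCond p F) (pInd X a) =
      pCondProb p (fun ω => X ω = a) F * (1 - pCondProb p (fun ω => X ω = a) F) := by
  set q := pCondProb p (fun ω => X ω = a) F
  have hsq : ∀ ω, (pInd X a ω - q) ^ 2 = pInd X a ω * (1 - 2 * q) + q ^ 2 := fun ω => by
    unfold pInd; split_ifs <;> ring
  have hq : ∑ ω, pCond p F ω * pInd X a ω = q := pExp_pCond_pInd X a F
  calc pVar (pCond p F) (pInd X a)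
      = (∑ ω, pCond p F ω * pInd X a ω) * (1 - 2 * q) + (∑ ω, pCond p F ω) * q ^ 2 := by
        simp only [pVar, pExp, hq, hsq, mul_add, sum_add_distrib, ← mul_assoc, ← sum_mul]
    _ = q * (1 - q) := by rw [hq, sum_pCond F hF]; ring

variable {β : Type*} [Fintype β] [DecidableEq β]

theorem pCondVar_pInd (hp : ∀ ω, 0 ≤ p ω) (X : Ω → Fin k) (a : Fin k) (Y : Ω → β) :
    pCondVar p (pInd X a) Y =
      ∑ y, pProb p (fun ω => X ω = a ∧ Y ω = y) *
        (1 - pCondProb p (fun ω => X ω = a) (fun ω => Y ω = y)) := by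
  have hterm : ∀ y, (if 0 < pProb p (fun ω => Y ω = y)
      then pProb p (fun ω => Y ω = y) * pVar (pCond p (fun ω => Y ω = y)) (pInd X a) else 0) =
      pProb p (fun ω => X ω = a ∧ Y ω = y) *
        (1 - pCondProb p (fun ω => X ω = a) (fun ω => Y ω = y)) := by
    intro y
    rw [pProb.and_eq_pCondProb_mul hp]
    split_ifs with hy
    · rw [pVar_pCond_pInd X a _ hy.ne']; ring
    · rw [le_antisymm (not_lt.mp hy) (pProb.nonneg hp _)]; ring
  rw [pCondVar, sum_subset (subset_univ _), sum_congr rfl fun y _ => hterm y]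
  intro y _ hy
  have : pProb p (fun ω => Y ω = y) = 0 :=
    sum_eq_zero fun ω _ => if_neg fun h => hy (mem_image.mpr ⟨ω, mem_univ ω, h⟩)
  simp [this]

/-- The expected conditional variance is the probability that `X` differs from an
independent resample of `X` given `Y`. -/
theorem pCondVarK_eq_sum (hp : ∀ ω, 0 ≤ p ω) (X : Ω → Fin k) (Y : Ω → β) :
    pCondVarK p X Y =
      ∑ ω, p ω * (1 - pCondProb p (fun ω' => X ω' = X ω) (fun ω' => Y ω' = Y ω)) := by
  rw [pProb.sum_mul_comp (fun ω => (X ω, Y ω))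
    (fun ay => 1 - pCondProb p (fun ω' => X ω' = ay.1) (fun ω' => Y ω' = ay.2)),
    Fintype.sum_prod_type, pCondVarK]
  refine sum_congr rfl fun a _ => ?_
  rw [pCondVar_pInd hp]
  exact sum_congr rfl fun y _ => by rw [pProb.congr fun ω => Prod.ext_iff]

end Variance

theorem sum_ite_apply_eq_prod {ι α : Type*} [Fintype ι] [DecidableEq ι] [Fintype α]
    [DecidableEq α] (g : ι → α → ℝ) (hg : ∀ j, ∑ a, g j a = 1) (i : ι) (b : α) :
    ∑ y : ι → α, (if y i = b then ∏ j, g j (y j) else 0) = g i b := by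
  let e : ι → α → ℝ := fun j c => if j = i then (if c = b then 1 else 0) else 1
  have he : ∀ y : ι → α, ∏ j, e j (y j) = if y i = b then 1 else 0 := fun y =>
    prod_ite_eq_of_mem' univ i _ (mem_univ i)
  have hsum : ∀ j, ∑ c, g j c * e j c = if j = i then g i b else 1 := by
    intro j
    by_cases hj : j = i
    · subst hj; simp [e]
    · simp [e, hj, hg j]
  calc ∑ y : ι → α, (if y i = b then ∏ j, g j (y j) else 0)
      = ∑ y : ι → α, ∏ j, g j (y j) * e j (y j) := by
        refine sum_congr rfl fun y _ => ?_
        rw [prod_mul_distrib, he, mul_ite, mul_one, mul_zero]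
    _ = g i b := by
        rw [← Fintype.prod_sum fun j c => g j c * e j c, prod_congr rfl fun j _ => hsum j,
          prod_ite_eq_of_mem' univ i _ (mem_univ i)]

section Resampling

variable {p : Ω → ℝ} {ι : Type*} [Fintype ι] {k : ℕ} {β : Type*} [DecidableEq β]

/-- The joint law of `ω` and of a vector `y` whose coordinates `y i` are drawn independently
from the conditional laws of `X i` given `Y = Y ω`. -/
def condResample (p : Ω → ℝ) (X : ι → Ω → Fin k) (Y : Ω → β) : Ω × (ι → Fin k) → ℝ :=
  fun c => p c.1 * ∏ i, pCondProb p (fun ω => X i ω = c.2 i) (fun ω => Y ω = Y c.1)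

variable (X : ι → Ω → Fin k) (Y : Ω → β)

theorem condResample_nonneg (hp : ∀ ω, 0 ≤ p ω) (c : Ω × (ι → Fin k)) :
    0 ≤ condResample p X Y c :=
  mul_nonneg (hp c.1) (prod_nonneg fun _ _ => div_nonneg (pProb.nonneg hp _) (pProb.nonneg hp _))

variable [DecidableEq ι]

theorem sum_condResample (hp : ∀ ω, 0 ≤ p ω) (ω : Ω) :
    ∑ y, condResample p X Y (ω, y) = p ω := by
  by_cases hω : p ω = 0
  · simp [condResample, hω]
  have hY : pProb p (fun ω' => Y ω' = Y ω) ≠ 0 := pProb.ne_zero_of_mem hp hω rfl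
  simp only [condResample, ← mul_sum]
  rw [← Fintype.prod_sum fun i a => pCondProb p (fun ω' => X i ω' = a) (fun ω' => Y ω' = Y ω),
    prod_eq_one fun i _ => sum_pCondProb _ _ hY, mul_one]

theorem pProb_condResample_fst (hp : ∀ ω, 0 ≤ p ω) (E : Ω → Prop) [DecidablePred E] :
    pProb (condResample p X Y) (fun c => E c.1) = pProb p E := by
  rw [pProb, Fintype.sum_prod_type]
  refine sum_congr rfl fun ω _ => ?_
  split_ifs <;> simp [sum_condResample X Y hp]

theorem pProb_condResample_snd [Fintype β] (x : ι → Fin k) :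
    pProb (condResample p X Y) (fun c => c.2 = x) =
      ∑ y, pProb p (fun ω => Y ω = y) *
        ∏ i, pCondProb p (fun ω => X i ω = x i) (fun ω => Y ω = y) := by
  rw [pProb, Fintype.sum_prod_type, ← pProb.sum_mul_comp Y]
  exact sum_congr rfl fun ω _ => by simp [condResample]

theorem pProb_condResample_ne [Fintype β] (hp : ∀ ω, 0 ≤ p ω) (i : ι) :
    pProb (condResample p X Y) (fun c => X i c.1 ≠ c.2 i) = pCondVarK p (X i) Y := by
  rw [pCondVarK_eq_sum hp, pProb, Fintype.sum_prod_type]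
  refine sum_congr rfl fun ω _ => ?_
  have hsplit : ∀ y : ι → Fin k, (if X i ω ≠ y i then condResample p X Y (ω, y) else 0) =
      condResample p X Y (ω, y) - p ω * if y i = X i ω then
        ∏ j, pCondProb p (fun ω' => X j ω' = y j) (fun ω' => Y ω' = Y ω) else 0 := by
    intro y
    by_cases h : y i = X i ω
    · simp [h, condResample]
    · simp [h, Ne.symm h]
  by_cases hω : p ω = 0
  · simp [hω, condResample]
  have hY : pProb p (fun ω' => Y ω' = Y ω) ≠ 0 := pProb.ne_zero_of_mem hp hω rfl
  rw [sum_congr rfl fun y _ => hsplit y, sum_sub_distrib, sum_condResample X Y hp, ← mul_sum,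
    sum_ite_apply_eq_prod (fun j a => pCondProb p (fun ω' => X j ω' = a) (fun ω' => Y ω' = Y ω))
      (fun j => sum_pCondProb _ _ hY), mul_one_sub]

end Resampling

theorem stmt_12_general {Ω : Type*} [Fintype Ω] (p : Ω → ℝ)
    (hp : ∀ ω, 0 ≤ p ω)
    {V : Type*} [DecidableEq V]
    (k : ℕ) (X : V → Ω → Fin k) (S T : Finset V) :
    (1 / 2) * ∑ x : T → Fin k,
        |pProb p (fun ω => ∀ t : T, X t ω = x t) -
          ∑ xS : S → Fin k,
            pProb p (fun ω => ∀ s : S, X s ω = xS s) *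
              ∏ t : T,
                pCondProb p (fun ω => X t ω = x t) (fun ω => ∀ s : S, X s ω = xS s)| ≤
      ∑ t ∈ T, pCondVarK p (X t) (fun ω => fun s : S => X s ω) := by
  set R := condResample p (fun t : T => X t) (fun ω (s : S) => X s ω)
  have hR : ∀ c, 0 ≤ R c := condResample_nonneg _ _ hp
  have hμ : ∀ x : T → Fin k, pProb p (fun ω => ∀ t : T, X t ω = x t) =
      pProb R (fun c => (fun t : T => X t c.1) = x) := fun x =>
    (pProb.congr fun ω => funext_iff.symm).trans (pProb_condResample_fst _ _ hp _).symm
  have hν : ∀ x : T → Fin k, ∑ xS : S → Fin k, pProb p (fun ω => ∀ s : S, X s ω = xS s) *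
      ∏ t : T, pCondProb p (fun ω => X t ω = x t) (fun ω => ∀ s : S, X s ω = xS s) =
      pProb R (fun c => c.2 = x) := by
    intro x
    rw [pProb_condResample_snd]
    simp only [funext_iff]
  calc _ = (1 / 2) * ∑ x : T → Fin k,
        |pProb R (fun c => (fun t : T => X t c.1) = x) - pProb R (fun c => c.2 = x)| := by
        simp only [hμ, hν]
    _ ≤ (1 / 2) * (2 * pProb R (fun c => (fun t : T => X t c.1) ≠ c.2)) := by
        gcongr; exact pProb.sum_abs_sub_le hR _ _
    _ = pProb R (fun c => ∃ t : T, X t c.1 ≠ c.2 t) := by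
        rw [pProb.congr fun c => Function.ne_iff]; ring
    _ ≤ ∑ t : T, pProb R (fun c => X t c.1 ≠ c.2 t) := pProb.exists_le_sum hR _
    _ = _ := by rw [← sum_coe_sort T]; simp only [R, pProb_condResample_ne _ _ hp]

/-- **error of propagation rounding.** For jointly distributed
`[k]`-valued random variables `(X_i)_{i∈V}` and `S, T ⊆ V`, the total variation distance
(half the ℓ¹-distance) between the law `μ_T` of `X_T` and the distribution `μ^{|S}_T`
obtained by sampling `x_S ∼ X_S` and then each coordinate `t ∈ T` independently from the
conditional law of `X_t` given `X_S = x_S`, is at most `Σ_{t∈T} E_{{X_S}} Var[X_t | X_S]`. -/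
theorem stmt_12 {Ω : Type*} [Fintype Ω] (p : Ω → ℝ)
    (hp : ∀ ω, 0 ≤ p ω) (hsum : ∑ ω, p ω = 1)
    {V : Type*} [Fintype V] [DecidableEq V]
    (k : ℕ) (X : V → Ω → Fin k) (S T : Finset V) :
    (1 / 2) * ∑ x : T → Fin k,
        |pProb p (fun ω => ∀ t : T, X t ω = x t) -
          ∑ xS : S → Fin k,
            pProb p (fun ω => ∀ s : S, X s ω = xS s) *
              ∏ t : T,
                pCondProb p (fun ω => X t ω = x t) (fun ω => ∀ s : S, X s ω = xS s)| ≤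
      ∑ t ∈ T, pCondVarK p (X t) (fun ω => fun s : S => X s ω) :=
  stmt_12_general p hp k X S T
end
end

section
/- Let G be a regular weighted constraint graph on vertex set V = [n] with normalized adjacency matrix A (symmetric and doubly stochastic), together with a permutation π_{ij} of [k] for each pair (i,j) with A_{ij} > 0 satisfying π_{ji} = π_{ij}⁻¹. Let v_{ia} (for i ∈ V, a ∈ [k]) be vectors in a real inner product space H such that: for every i, the vectors {v_{ia}}_{a∈[k]} are pairwise orthogonal and Σ_{a∈[k]} ‖v_{ia}‖² = 1; and ⟨v_{ia}, v_{jb}⟩ ≥ 0 for all i, j, a, b. Let P be an orthogonal projection of H and set u_{ia} := P v_{ia}; assume additionally that ⟨v_{ia} − u_{ia}, v_{jb} − u_{jb}⟩ ≥ 0 for all i, j, a, b. Let w_{ia} (for i ∈ V, a ∈ [k]) be any vectors in a real inner product space satisfying ⟨w_{ia}, w_{jb}⟩ = ‖u_{ia}‖·‖u_{jb}‖·⟨ū_{ia}, ū_{jb}⟩²·⟨v̄_{ia}, v̄_{jb}⟩ for all i, j, a, b (where x̄ := x/‖x‖, and any factor involving a zero vector is interpreted as 0), and set U_i := Σ_{a∈[k]}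 w_{ia}. If E_{ij∼G} Σ_{a∈[k]} ‖v_{ia} − v_{j,π_{ij}(a)}‖² ≤ η, then E_{ij∼G} ‖U_i − U_j‖² ≤ 3η. -/
/-!
Along an edge `ij`, the vectors `w_{ia}` are orthogonal in `a` and all Gram entries are
nonnegative, so matching `a` with `π_{ij}(a)` gives
`‖U_i - U_j‖² ≤ Σ_a ‖w_{ia} - w_{j,π_{ij}(a)}‖²`. Each summand equals `s² + t² - 2stα²β`, where
`s, t` are the norms of the two projections and `α, β` the cosines of the projected and the
original pair. Splitting it as `(s² + t² - 2stα) + 2stα(1 - β) + 2stαβ(1 - α)`, each of the three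
terms is at most `‖v_{ia} - v_{j,π_{ij}(a)}‖²`, because `P` shrinks `v_{ia}`, `v_{jb}` and their
difference.
-/

open Finset RealInnerProductSpace

lemma sq_add_sq_sub_two_mul_le_three_mul {s t p q α β : ℝ} (hs : 0 ≤ s) (ht : 0 ≤ t)
    (hsp : s ≤ p) (htq : t ≤ q) (hα : α ≤ 1) (hβ₀ : 0 ≤ β) (hβ₁ : β ≤ 1)
    (h : s ^ 2 + t ^ 2 - 2 * (s * t * α) ≤ p ^ 2 + q ^ 2 - 2 * (p * q * β)) :
    s ^ 2 + t ^ 2 - 2 * (s * t * α ^ 2 * β) ≤ 3 * (p ^ 2 + q ^ 2 - 2 * (p * q * β)) := by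
  have hst₀ : 0 ≤ s * t := mul_nonneg hs ht
  have hst : s * t ≤ p * q := mul_le_mul hsp htq ht (hs.trans hsp)
  have hαβ : α * β ≤ 1 := by nlinarith
  have h₁ : s * t * α * (1 - β) ≤ p * q * (1 - β) :=
    mul_le_mul_of_nonneg_right (by nlinarith) (by linarith)
  have h₂ : s * t * (α * β) * (1 - α) ≤ s * t * (1 - α) :=
    mul_le_mul_of_nonneg_right (by nlinarith) (by linarith)
  nlinarith [sq_nonneg (p - q), sq_nonneg (s - t)]

section InnerProductSpace

variable {F : Type*} [NormedAddCommGroup F] [InnerProductSpace ℝ F]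

lemma norm_mul_norm_mul_inner_smul_inv_norm (x y : F) :
    ‖x‖ * ‖y‖ * ⟪‖x‖⁻¹ • x, ‖y‖⁻¹ • y⟫ = ⟪x, y⟫ := by
  rcases eq_or_ne x 0 with rfl | hx
  · simp
  rcases eq_or_ne y 0 with rfl | hy
  · simp
  rw [real_inner_smul_left, real_inner_smul_right]
  field_simp

lemma inner_smul_inv_norm_le_one (x y : F) : ⟪‖x‖⁻¹ • x, ‖y‖⁻¹ • y⟫ ≤ 1 := by
  rw [real_inner_smul_left, real_inner_smul_right, ← mul_assoc, ← mul_inv, mul_comm,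
    ← div_eq_mul_inv]
  exact (abs_le.mp (abs_real_inner_div_norm_mul_norm_le_one x y)).2

lemma inner_smul_inv_norm_nonneg {x y : F} (h : 0 ≤ ⟪x, y⟫) :
    0 ≤ ⟪‖x‖⁻¹ • x, ‖y‖⁻¹ • y⟫ := by
  rw [real_inner_smul_left, real_inner_smul_right]
  positivity

lemma inner_smul_inv_norm_self {x : F} (hx : x ≠ 0) : ⟪‖x‖⁻¹ • x, ‖x‖⁻¹ • x⟫ = 1 := by
  rw [real_inner_smul_left, real_inner_smul_right, real_inner_self_eq_norm_sq]
  field_simp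

lemma norm_sq_add_norm_sq_sub_two_mul_le_three_mul_norm_sub_sq {x y u u' : F}
    (hu : ‖u‖ ≤ ‖x‖) (hu' : ‖u'‖ ≤ ‖y‖) (huu' : ‖u - u'‖ ≤ ‖x - y‖) (hxy : 0 ≤ ⟪x, y⟫) :
    ‖u‖ ^ 2 + ‖u'‖ ^ 2 -
        2 * (‖u‖ * ‖u'‖ * ⟪‖u‖⁻¹ • u, ‖u'‖⁻¹ • u'⟫ ^ 2 * ⟪‖x‖⁻¹ • x, ‖y‖⁻¹ • y⟫) ≤
      3 * ‖x - y‖ ^ 2 := by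
  have hsq : ‖u - u'‖ ^ 2 ≤ ‖x - y‖ ^ 2 := pow_le_pow_left₀ (norm_nonneg _) huu' 2
  rw [norm_sub_sq_real, ← norm_mul_norm_mul_inner_smul_inv_norm u u'] at hsq
  rw [norm_sub_sq_real, ← norm_mul_norm_mul_inner_smul_inv_norm x y] at hsq ⊢
  have := sq_add_sq_sub_two_mul_le_three_mul (norm_nonneg _) (norm_nonneg _) hu hu'
    (inner_smul_inv_norm_le_one u u') (inner_smul_inv_norm_nonneg hxy)
    (inner_smul_inv_norm_le_one x y) (by linarith)
  linarith

lemma norm_sum_sq_of_pairwise_inner_eq_zero {ι : Type*} [Fintype ι] {x : ι → F}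
    (hx : Pairwise fun a b => ⟪x a, x b⟫ = 0) : ‖∑ a, x a‖ ^ 2 = ∑ a, ‖x a‖ ^ 2 := by
  rw [← real_inner_self_eq_norm_sq, sum_inner]
  refine sum_congr rfl fun a _ => ?_
  rw [inner_sum, sum_eq_single a (fun b _ hba => hx hba.symm) (by simp),
    real_inner_self_eq_norm_sq]

lemma norm_sum_sub_sum_sq_le {ι : Type*} [Fintype ι] {x y : ι → F} (σ : Equiv.Perm ι)
    (hx : Pairwise fun a b => ⟪x a, x b⟫ = 0) (hy : Pairwise fun a b => ⟪y a, y b⟫ = 0)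
    (hxy : ∀ a b, 0 ≤ ⟪x a, y b⟫) :
    ‖∑ a, x a - ∑ a, y a‖ ^ 2 ≤ ∑ a, ‖x a - y (σ a)‖ ^ 2 := by
  have hcross : ∑ a, ⟪x a, y (σ a)⟫ ≤ ⟪∑ a, x a, ∑ a, y a⟫ := by
    rw [sum_inner]
    refine sum_le_sum fun a _ => ?_
    rw [inner_sum]
    exact single_le_sum (fun b _ => hxy a b) (mem_univ (σ a))
  have hy' : ∑ a, ‖y (σ a)‖ ^ 2 = ∑ a, ‖y a‖ ^ 2 := Equiv.sum_comp σ fun a => ‖y a‖ ^ 2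
  simp only [norm_sub_sq_real, sum_add_distrib, sum_sub_distrib, ← mul_sum, hy',
    norm_sum_sq_of_pairwise_inner_eq_zero hx, norm_sum_sq_of_pairwise_inner_eq_zero hy]
  linarith

end InnerProductSpace

lemma LinearMap.IsSymmetric.norm_map_le_of_idempotent {F : Type*} [NormedAddCommGroup F]
    [InnerProductSpace ℝ F] {T : F →ₗ[ℝ] F} (hT : T.IsSymmetric) (hidem : ∀ x, T (T x) = T x)
    (x : F) : ‖T x‖ ≤ ‖x‖ := by
  have h : ‖T x‖ ^ 2 ≤ ‖x‖ * ‖T x‖ := by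
    rw [← real_inner_self_eq_norm_sq, hT, hidem]
    exact real_inner_le_norm x (T x)
  nlinarith [norm_nonneg x, norm_nonneg (T x)]

theorem stmt_18_general {n k : ℕ}
    (A : Matrix (Fin n) (Fin n) ℝ)
    (hnonneg : ∀ i j, 0 ≤ A i j)
    (π : Fin n → Fin n → Equiv.Perm (Fin k))
    {H : Type*} [NormedAddCommGroup H] [InnerProductSpace ℝ H]
    (v : Fin n → Fin k → H)
    (horth : ∀ i, ∀ a b : Fin k, a ≠ b → (⟪v i a, v i b⟫ : ℝ) = 0)
    (hpos : ∀ i j a b, 0 ≤ (⟪v i a, v j b⟫ : ℝ))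
    (P : H →L[ℝ] H)
    (hPsa : ∀ x y : H, (⟪P x, y⟫ : ℝ) = ⟪x, P y⟫)
    (hPidem : ∀ x : H, P (P x) = P x)
    {H' : Type*} [NormedAddCommGroup H'] [InnerProductSpace ℝ H']
    (w : Fin n → Fin k → H')
    (hw : ∀ i j a b,
      (⟪w i a, w j b⟫ : ℝ) =
        ‖P (v i a)‖ * ‖P (v j b)‖ *
          (⟪‖P (v i a)‖⁻¹ • P (v i a), ‖P (v j b)‖⁻¹ • P (v j b)⟫ : ℝ) ^ 2 *
          (⟪‖v i a‖⁻¹ • v i a, ‖v j b‖⁻¹ • v j b⟫ : ℝ))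
    (η : ℝ)
    (hval : (1 / (n : ℝ)) * ∑ i, ∑ j, A i j * ∑ a, ‖v i a - v j (π i j a)‖ ^ 2 ≤ η) :
    (1 / (n : ℝ)) * ∑ i, ∑ j, A i j * ‖(∑ a, w i a) - ∑ a, w j a‖ ^ 2 ≤ 3 * η := by
  have hP (x : H) : ‖P x‖ ≤ ‖x‖ :=
    LinearMap.IsSymmetric.norm_map_le_of_idempotent (T := (P : H →ₗ[ℝ] H)) hPsa hPidem x
  have hw_orth (i : Fin n) : Pairwise fun a b => ⟪w i a, w i b⟫ = 0 := fun a b hab => by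
    show ⟪w i a, w i b⟫ = 0
    rw [hw, real_inner_smul_left (v i a), real_inner_smul_right _ (v i b), horth i a b hab]
    ring
  have hw_nonneg (i j : Fin n) (a b : Fin k) : 0 ≤ ⟪w i a, w j b⟫ := by
    rw [hw]
    exact mul_nonneg (by positivity) (inner_smul_inv_norm_nonneg (hpos i j a b))
  have hw_norm (i : Fin n) (a : Fin k) : ‖w i a‖ ^ 2 = ‖P (v i a)‖ ^ 2 := by
    rw [← real_inner_self_eq_norm_sq, hw]
    rcases eq_or_ne (P (v i a)) 0 with h | h
    · simp [h]
    rw [inner_smul_inv_norm_self h, inner_smul_inv_norm_self fun hv => h (by simp [hv])]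
    ring
  have hedge (i j : Fin n) :
      ‖(∑ a, w i a) - ∑ a, w j a‖ ^ 2 ≤ 3 * ∑ a, ‖v i a - v j (π i j a)‖ ^ 2 :=
    calc ‖(∑ a, w i a) - ∑ a, w j a‖ ^ 2
        ≤ ∑ a, ‖w i a - w j (π i j a)‖ ^ 2 :=
          norm_sum_sub_sum_sq_le (π i j) (hw_orth i) (hw_orth j) (hw_nonneg i j)
      _ ≤ ∑ a, 3 * ‖v i a - v j (π i j a)‖ ^ 2 := sum_le_sum fun a _ => by
          rw [norm_sub_sq_real, hw_norm, hw_norm, hw]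
          linarith [norm_sq_add_norm_sq_sub_two_mul_le_three_mul_norm_sub_sq (hP (v i a))
            (hP (v j (π i j a))) (by rw [← map_sub]; exact hP _) (hpos i j a (π i j a))]
      _ = 3 * ∑ a, ‖v i a - v j (π i j a)‖ ^ 2 := (mul_sum _ _ _).symm
  calc (1 / (n : ℝ)) * ∑ i, ∑ j, A i j * ‖(∑ a, w i a) - ∑ a, w j a‖ ^ 2
      ≤ (1 / (n : ℝ)) * ∑ i, ∑ j, A i j * (3 * ∑ a, ‖v i a - v j (π i j a)‖ ^ 2) := by
        gcongr with i _ j _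
        · exact hnonneg i j
        · exact hedge i j
    _ = 3 * ((1 / (n : ℝ)) * ∑ i, ∑ j, A i j * ∑ a, ‖v i a - v j (π i j a)‖ ^ 2) := by
        simp only [mul_sum]
        ring_nf
    _ ≤ 3 * η := by linarith

/-- **high local correlation, Lemma `highlocalcorrelation`.** Let `A` be
the normalized adjacency matrix of a regular weighted constraint graph with permutations
`π_{ij}` on the edges satisfying `π_{ji} = π_{ij}⁻¹`. Let `v_{ia}` be SDP vectors that
are orthogonal across labels for each vertex, with `Σ_a ‖v_{ia}‖² = 1` and pairwise
nonnegative inner products. Let `P` be an orthogonal projection, `u_{ia} := P v_{ia}`,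
assume `⟨v_{ia} − u_{ia}, v_{jb} − u_{jb}⟩ ≥ 0`, and let `w_{ia}` be vectors whose Gram
matrix is `‖u_{ia}‖·‖u_{jb}‖·⟨ū_{ia}, ū_{jb}⟩²·⟨v̄_{ia}, v̄_{jb}⟩` (zero factors are `0`;
in Lean `‖0‖⁻¹ • 0 = 0` yields this convention). Set `U_i := Σ_a w_{ia}`. If the SDP
solution has value `1 − η`, i.e. `E_{ij∼G} Σ_a ‖v_{ia} − v_{j,π_{ij}(a)}‖² ≤ η`, then
`E_{ij∼G} ‖U_i − U_j‖² ≤ 3η`. -/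
theorem stmt_18 {n k : ℕ} (hn : 0 < n)
    (A : Matrix (Fin n) (Fin n) ℝ) (hA : A.IsHermitian)
    (hnonneg : ∀ i j, 0 ≤ A i j) (hrow : ∀ i, ∑ j, A i j = 1)
    (π : Fin n → Fin n → Equiv.Perm (Fin k))
    (hπ : ∀ i j, 0 < A i j → π j i = (π i j)⁻¹)
    {H : Type*} [NormedAddCommGroup H] [InnerProductSpace ℝ H]
    (v : Fin n → Fin k → H)
    (horth : ∀ i, ∀ a b : Fin k, a ≠ b → (⟪v i a, v i b⟫ : ℝ) = 0)
    (hnorm : ∀ i, ∑ a, ‖v i a‖ ^ 2 = 1)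
    (hpos : ∀ i j a b, 0 ≤ (⟪v i a, v j b⟫ : ℝ))
    (P : H →L[ℝ] H)
    (hPsa : ∀ x y : H, (⟪P x, y⟫ : ℝ) = ⟪x, P y⟫)
    (hPidem : ∀ x : H, P (P x) = P x)
    (hres : ∀ i j a b, 0 ≤ (⟪v i a - P (v i a), v j b - P (v j b)⟫ : ℝ))
    {H' : Type*} [NormedAddCommGroup H'] [InnerProductSpace ℝ H']
    (w : Fin n → Fin k → H')
    (hw : ∀ i j a b,
      (⟪w i a, w j b⟫ : ℝ) =
        ‖P (v i a)‖ * ‖P (v j b)‖ *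
          (⟪‖P (v i a)‖⁻¹ • P (v i a), ‖P (v j b)‖⁻¹ • P (v j b)⟫ : ℝ) ^ 2 *
          (⟪‖v i a‖⁻¹ • v i a, ‖v j b‖⁻¹ • v j b⟫ : ℝ))
    (η : ℝ)
    (hval : (1 / (n : ℝ)) * ∑ i, ∑ j, A i j * ∑ a, ‖v i a - v j (π i j a)‖ ^ 2 ≤ η) :
    (1 / (n : ℝ)) * ∑ i, ∑ j, A i j * ‖(∑ a, w i a) - ∑ a, w j a‖ ^ 2 ≤ 3 * η :=
  stmt_18_general A hnonneg π v horth hpos P hPsa hPidem w hw η hval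
end
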